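/- arXiv:1909.01301 — 10 statements merged into one kernel-verified Lean document; each statement's English description precedes it below -/
import Mathlib

section
/- Let A, B be linear operators in a Hilbert space H with dom(A) ⊆ dom(B), and suppose B is uniformly positive, i.e., B is selfadjoint and there exists c > 0 with ⟨Bx,x⟩ ≥ c‖x‖² for all x ∈ dom(B). Then w(A,B) = W(B^{-1/2} A B^{-1/2}), the numerical range of the operator B^{-1/2} A B^{-1/2}; in particular w(A,B) is convex. -/
open Filter Topology

variable {H : Type*} [NormedAddCommGroup H] [InnerProductSpace ℂ H] [CompleteSpace H]

/-- The numerical range of (the restriction to the domain `d` of) a linear operator `T`. -/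
def numRange (T : H →ₗ[ℂ] H) (d : Submodule ℂ H) : Set ℂ :=
  {z | ∃ x ∈ d, ‖x‖ = 1 ∧ z = (inner ℂ (T x) x : ℂ)}

/-- The pencil numerical range `W(A,B) = {λ : 0 ∈ closure (W(A - λB))}`. -/
def pencilW (A B : H →ₗ[ℂ] H) (dA : Submodule ℂ H) : Set ℂ :=
  {lam : ℂ | (0 : ℂ) ∈ closure (numRange (A - lam • B) dA)}

/-- The pencil numerical range `w(A,B) = {⟨Ax,x⟩/⟨Bx,x⟩ : x ∈ dom A, ⟨Bx,x⟩ ≠ 0}`. -/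
def pencilw (A B : H →ₗ[ℂ] H) (dA : Submodule ℂ H) : Set ℂ :=
  {lam : ℂ | ∃ x ∈ dA, (inner ℂ (B x) x : ℂ) ≠ 0 ∧
    lam = (inner ℂ (A x) x : ℂ) / (inner ℂ (B x) x : ℂ)}

/-- The essential numerical range of an operator `T` with domain `d`, via weakly null
normalized sequences. -/
def essNumRange (T : H →ₗ[ℂ] H) (d : Submodule ℂ H) : Set ℂ :=
  {z | ∃ x : ℕ → H, (∀ n, x n ∈ d) ∧ (∀ n, ‖x n‖ = 1) ∧
    (∀ y : H, Tendsto (fun n => (inner ℂ y (x n) : ℂ)) atTop (𝓝 0)) ∧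
    Tendsto (fun n => (inner ℂ (T (x n)) (x n) : ℂ)) atTop (𝓝 z)}

/-- The pencil essential numerical range `W_e(A,B) = {λ : 0 ∈ W_e(A - λB)}`. -/
def pencilWe (A B : H →ₗ[ℂ] H) (dA : Submodule ℂ H) : Set ℂ :=
  {lam : ℂ | (0 : ℂ) ∈ essNumRange (A - lam • B) dA}

/-- The pencil essential numerical range `w_e(A,B)`. -/
def pencilwe (A B : H →ₗ[ℂ] H) (dA : Submodule ℂ H) : Set ℂ :=
  {lam : ℂ | ∃ x : ℕ → H, (∀ n, x n ∈ dA) ∧ (∀ n, ‖x n‖ = 1) ∧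
    (∀ y : H, Tendsto (fun n => (inner ℂ y (x n) : ℂ)) atTop (𝓝 0)) ∧
    (∀ n, (inner ℂ (B (x n)) (x n) : ℂ) ≠ 0) ∧
    Tendsto (fun n => (inner ℂ (A (x n)) (x n) : ℂ) / (inner ℂ (B (x n)) (x n) : ℂ))
      atTop (𝓝 lam)}


open Complex in
/-- Toeplitz–Hausdorff. -/
private lemma numRange_convex (T : H →ₗ[ℂ] H) (d : Submodule ℂ H) : Convex ℝ (numRange T d) := by
  rintro z1 ⟨x, hx, hx1, rfl⟩ z2 ⟨y, hy, hy1, rfl⟩ p q hp hq hpq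
  set a : ℂ := (inner ℂ (T x) x : ℂ) with ha
  set b : ℂ := (inner ℂ (T y) y : ℂ) with hb
  by_cases hab : a = b
  · exact ⟨x, hx, hx1, by rw [← ha, hab, ← add_smul, hpq, one_smul]⟩
  -- phase choice
  set α : ℂ := (inner ℂ (T x) y : ℂ) with hα
  set β : ℂ := (inner ℂ (T y) x : ℂ) with hβ
  set γ : ℂ := α - a * (inner ℂ x y : ℂ) with hγ
  set δ : ℂ := β - a * (inner ℂ y x : ℂ) with hδ
  set h : ℝ → ℝ := fun φ =>
    (((starRingEnd ℂ) (Complex.exp (φ * I)) * γ + Complex.exp (φ * I) * δ) / (b - a)).im with hh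
  have hcont : Continuous h := by
    apply Complex.continuous_im.comp
    apply Continuous.div_const
    have h1 : Continuous fun φ : ℝ => Complex.exp (φ * I) :=
      Complex.continuous_exp.comp (Complex.continuous_ofReal.mul continuous_const)
    exact ((Complex.continuous_conj.comp h1).mul continuous_const).add (h1.mul continuous_const)
  have hπ : h Real.pi = - h 0 := by
    have e1 : ((starRingEnd ℂ) (-1 : ℂ) * γ + (-1 : ℂ) * δ) / (b - a)
        = -(((starRingEnd ℂ) (Complex.exp ((0:ℝ) * I)) * γ + Complex.exp ((0:ℝ) * I) * δ) / (b - a)) := by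
      simp; ring
    simp only [hh, Complex.ofReal_zero, zero_mul] at e1 ⊢
    rw [show ((Real.pi : ℂ) * I) = (Real.pi : ℂ) * I from rfl, Complex.exp_pi_mul_I, e1,
      Complex.neg_im]
  obtain ⟨φ, -, hφ⟩ := intermediate_value_uIcc (a := (0:ℝ)) (b := Real.pi) hcont.continuousOn
    (show (0:ℝ) ∈ Set.uIcc (h 0) (h Real.pi) by
      rw [hπ, Set.mem_uIcc]
      rcases le_total (h 0) 0 with h0 | h0
      exacts [Or.inl ⟨h0, by linarith⟩, Or.inr ⟨by linarith, h0⟩])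
  set e : ℂ := Complex.exp (φ * I) with he
  set E : ℂ := (starRingEnd ℂ) e with hE
  have hEe : E * e = 1 := by
    rw [hE, ← Complex.normSq_eq_conj_mul_self, Complex.normSq_eq_norm_sq, he,
      Complex.norm_exp_ofReal_mul_I]
    norm_num
  set K : ℂ := (E * γ + e * δ) / (b - a) with hK
  have hKim : K.im = 0 := hφ
  have hKre : (K.re : ℂ) = K := Complex.ext (by simp) (by simp [hKim])
  set w : H := e • x with hw
  have hw1 : ‖w‖ = 1 := by
    rw [hw, norm_smul, he, Complex.norm_exp_ofReal_mul_I, hx1, one_mul]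
  have hwd : w ∈ d := d.smul_mem _ hx
  have hFw : (inner ℂ (T w) w : ℂ) = a := by
    rw [hw, map_smul, inner_smul_left, inner_smul_right, ← mul_assoc, ← hE, hEe, one_mul, ← ha]
  set zs : ℝ → H := fun s => ((1 - s : ℝ) : ℂ) • w + ((s : ℝ) : ℂ) • y with hzs
  have hba : b - a ≠ 0 := sub_ne_zero.mpr fun hh' => hab hh'.symm
  -- expansion of the quadratic forms along the path
  have hF : ∀ s : ℝ, (inner ℂ (T (zs s)) (zs s) : ℂ)
      = ((1-s:ℝ):ℂ)^2 * a + ((s:ℝ):ℂ)^2 * b + ((s:ℝ):ℂ) * ((1-s:ℝ):ℂ) * (E * α + e * β) := by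
    intro s
    simp only [hzs, map_add, map_smul, inner_add_left, inner_add_right, inner_smul_left,
      inner_smul_right, Complex.conj_ofReal, hFw]
    rw [show (inner ℂ (T w) y : ℂ) = E * α by rw [hw, map_smul, inner_smul_left, ← hE, hα],
      show (inner ℂ (T y) w : ℂ) = e * β by rw [hw, inner_smul_right, hβ]]
    push_cast
    ring
  have hN : ∀ s : ℝ, (inner ℂ (zs s) (zs s) : ℂ)
      = ((1-s:ℝ):ℂ)^2 + ((s:ℝ):ℂ)^2 + ((s:ℝ):ℂ) * ((1-s:ℝ):ℂ) * (E * (inner ℂ x y : ℂ) + e * (inner ℂ y x : ℂ)) := by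
    intro s
    simp only [hzs, inner_add_left, inner_add_right, inner_smul_left, inner_smul_right,
      Complex.conj_ofReal]
    rw [show (inner ℂ w w : ℂ) = 1 by
        rw [inner_self_eq_norm_sq_to_K, hw1]; norm_num,
      show (inner ℂ y y : ℂ) = 1 by
        rw [inner_self_eq_norm_sq_to_K, hy1]; norm_num,
      show (inner ℂ w y : ℂ) = E * (inner ℂ x y : ℂ) by rw [hw, inner_smul_left, ← hE],
      show (inner ℂ y w : ℂ) = e * (inner ℂ y x : ℂ) by rw [hw, inner_smul_right]]
    push_cast
    ring
  have hG : ∀ s : ℝ, (inner ℂ (T (zs s)) (zs s) : ℂ)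
      = a * (inner ℂ (zs s) (zs s) : ℂ) + (b - a) * (((s:ℝ):ℂ)^2 + ((s:ℝ):ℂ) * ((1-s:ℝ):ℂ) * K) := by
    intro s
    rw [hF s, hN s, hK, hγ, hδ]
    field_simp
    ring
  -- the path stays away from zero
  have hne : ∀ s ∈ Set.Icc (0:ℝ) 1, zs s ≠ 0 := by
    rintro s ⟨hs0, hs1⟩ h0
    have h1 : ((1 - s : ℝ) : ℂ) • w = -(((s : ℝ) : ℂ) • y) := by
      rw [eq_neg_iff_add_eq_zero]; exact h0
    have h2 : |1 - s| = |s| := by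
      have h2' := congrArg norm h1
      simpa [norm_smul, hw1, hy1, ← Complex.ofReal_one,
        ← Complex.ofReal_sub, Complex.norm_real, Real.norm_eq_abs] using h2'
    have hs : s = 1/2 := by
      rw [_root_.abs_of_nonneg (by linarith : (0:ℝ) ≤ 1 - s), _root_.abs_of_nonneg hs0] at h2
      linarith
    simp only [hzs] at h0
    rw [hs] at h0
    push_cast at h0
    norm_num at h0
    have h4 := congrArg (fun v : H => (2 : ℂ) • v) h0
    simp only [smul_add, smul_smul, smul_zero] at h4
    norm_num at h4
    have h5 : w + y = 0 := h4
    have h3 : y = -w := eq_neg_of_add_eq_zero_right h5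
    have : b = a := by rw [hb, h3, map_neg, inner_neg_neg, hFw]
    exact hab this.symm
  -- continuity of the normalized real part along the path
  have hzsc : Continuous zs := by
    apply Continuous.add
    · exact (Complex.continuous_ofReal.comp (continuous_const.sub continuous_id)).smul
        continuous_const
    · exact (Complex.continuous_ofReal.comp continuous_id).smul continuous_const
  set f : ℝ → ℝ := fun s => (s^2 + s * (1 - s) * K.re) / ‖zs s‖^2 with hf
  have hfc : ContinuousOn f (Set.Icc 0 1) := by
    apply ContinuousOn.div
    · fun_prop
    · exact ((hzsc.norm.pow 2).continuousOn)
    · intro s hs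
      exact pow_ne_zero 2 (norm_ne_zero_iff.mpr (hne s hs))
  have hzs0 : zs 0 = w := by simp [hzs]
  have hzs1 : zs 1 = y := by simp [hzs]
  have hf0 : f 0 = 0 := by simp [hf]
  have hf1 : f 1 = 1 := by simp [hf, hzs1, hy1]
  have hq1 : q ≤ 1 := by linarith
  obtain ⟨s, hsmem, hfs⟩ := intermediate_value_uIcc (a := (0:ℝ)) (b := 1)
    (hfc.mono (by rw [Set.uIcc_of_le zero_le_one]))
    (show q ∈ Set.uIcc (f 0) (f 1) by
      rw [hf0, hf1, Set.uIcc_of_le zero_le_one]; exact ⟨hq, hq1⟩)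
  rw [Set.uIcc_of_le zero_le_one] at hsmem
  -- the witness
  set t : ℝ := ‖zs s‖ with htdef
  have htpos : 0 < t := norm_pos_iff.mpr (hne s hsmem)
  refine ⟨((t⁻¹ : ℝ) : ℂ) • zs s, ?_, ?_, ?_⟩
  · exact Submodule.smul_mem _ _ (Submodule.add_mem _ (Submodule.smul_mem _ _ hwd)
      (Submodule.smul_mem _ _ hy))
  · rw [norm_smul, Complex.norm_real, Real.norm_eq_abs, _root_.abs_of_nonneg
      (inv_nonneg.mpr htpos.le), inv_mul_cancel₀ htpos.ne']
  · -- value computation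
    rw [map_smul, inner_smul_left, inner_smul_right, Complex.conj_ofReal, hG s]
    have hinner : (inner ℂ (zs s) (zs s) : ℂ) = ((t^2 : ℝ) : ℂ) := by
      rw [inner_self_eq_norm_sq_to_K, ← htdef]; norm_cast
    rw [hinner, ← hKre]
    have hval : ((s:ℝ):ℂ)^2 + ((s:ℝ):ℂ) * ((1-s:ℝ):ℂ) * (K.re : ℂ)
        = ((s^2 + s * (1-s) * K.re : ℝ) : ℂ) := by push_cast; ring
    rw [hval]
    have hfs' : ((s^2 + s * (1-s) * K.re : ℝ) : ℂ) = ((q * t^2 : ℝ) : ℂ) := by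
      norm_cast
      have := hfs
      rw [hf] at this
      have htne : ‖zs s‖ ≠ 0 := htpos.ne'
      field_simp at this
      rw [htdef]
      linarith [this]
    rw [hfs']
    have hp' : (p : ℂ) = 1 - (q : ℂ) := by
      have : (p : ℂ) + (q : ℂ) = 1 := by exact_mod_cast congrArg (Complex.ofReal) hpq
      linear_combination this
    rw [Complex.real_smul, Complex.real_smul, hp']
    have ht0 : ((t:ℝ):ℂ) ≠ 0 := by exact_mod_cast htpos.ne'
    push_cast
    field_simp
    ring

private lemma seteq (A B S : H →ₗ[ℂ] H) (dA dB : Submodule ℂ H) (hAB : dA ≤ dB)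
    (hSsym : ∀ x y : H, (inner ℂ (S x) y : ℂ) = inner ℂ x (S y))
    (hSinvr : ∀ x : H, B (S (S x)) = x)
    (hSinvl : ∀ x ∈ dB, S (S (B x)) = x) :
    pencilw A B dA =
      {z : ℂ | ∃ y : H, S y ∈ dA ∧ ‖y‖ = 1 ∧ z = (inner ℂ (S (A (S y))) y : ℂ)} := by
  have hSinj : Function.Injective S := by
    intro u v huv
    have := congrArg (fun z => B (S z)) huv
    simpa [hSinvr] using this
  ext lam
  constructor
  · rintro ⟨x, hxA, hBx, rfl⟩
    have hxB : x ∈ dB := hAB hxA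
    set y0 : H := S (B x) with hy0
    have hSy0 : S y0 = x := hSinvl x hxB
    have hnorm : (inner ℂ y0 y0 : ℂ) = (inner ℂ (B x) x : ℂ) := by
      rw [hy0, hSsym (B x) (S (B x)), ← hy0, hSy0]
    set t : ℝ := ‖y0‖ with ht
    have ht2 : ((t : ℂ))^2 = (inner ℂ (B x) x : ℂ) := by
      rw [← hnorm, inner_self_eq_norm_sq_to_K, ← ht]; norm_cast
    have htne : (t : ℂ) ≠ 0 := by
      intro h0
      apply hBx
      rw [← ht2, h0]; ring
    refine ⟨((t⁻¹ : ℝ) : ℂ) • y0, ?_, ?_, ?_⟩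
    · rw [map_smul, hSy0]; exact dA.smul_mem _ hxA
    · have htpos : (0:ℝ) < t := by
        rcases lt_or_eq_of_le (norm_nonneg y0) with h | h
        · exact h
        · exact absurd (by exact_mod_cast h.symm) htne
      rw [norm_smul, Complex.norm_real, Real.norm_eq_abs,
        _root_.abs_of_nonneg (inv_nonneg.mpr htpos.le), ← ht, inv_mul_cancel₀ htpos.ne']
    · rw [map_smul, hSy0, map_smul, map_smul, inner_smul_left, inner_smul_right,
        Complex.conj_ofReal]
      have hinner : (inner ℂ (S (A x)) y0 : ℂ) = inner ℂ (A x) x := by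
        rw [hSsym (A x) y0, hSy0]
      rw [hinner, ← ht2, div_eq_iff (pow_ne_zero 2 htne)]
      push_cast
      rw [show ((t:ℂ))⁻¹ * (((t:ℂ))⁻¹ * (inner ℂ (A x) x : ℂ)) * ((t:ℂ))^2
          = (((t:ℂ))⁻¹*(t:ℂ)) * ((((t:ℂ))⁻¹*(t:ℂ)) * inner ℂ (A x) x) by ring,
        inv_mul_cancel₀ htne, one_mul, one_mul]
  · rintro ⟨y, hSy, hy1, rfl⟩
    set x : H := S y with hx
    have hxB : x ∈ dB := hAB hSy
    have hSBx : S (B x) = y := by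
      apply hSinj
      rw [hSinvl x hxB, hx]
    have hBxx : (inner ℂ (B x) x : ℂ) = 1 := by
      rw [hx, ← hSsym (B (S y)) y, ← hx, hSBx, inner_self_eq_norm_sq_to_K, hy1]
      norm_num
    refine ⟨x, hSy, by rw [hBxx]; exact one_ne_zero, ?_⟩
    rw [hBxx, div_one, hSsym (A (S y)) y, ← hx]

/-- If `B` is uniformly positive (selfadjoint with `⟨Bx,x⟩ ≥ c‖x‖²`, `c > 0`) and `S = B^{-1/2}`
(the bounded positive selfadjoint square root of `B⁻¹`), then
`w(A,B) = W(B^{-1/2} A B^{-1/2})` (on the domain `{y : S y ∈ dom A}`); in particular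
`w(A,B)` is convex. -/
theorem stmt_4 (A B S : H →ₗ[ℂ] H) (dA dB : Submodule ℂ H) (hAB : dA ≤ dB)
    (hBsym : ∀ x ∈ dB, ∀ y ∈ dB, (inner ℂ (B x) y : ℂ) = inner ℂ x (B y))
    (c : ℝ) (hc : 0 < c)
    (hBpos : ∀ x ∈ dB, c * ‖x‖ ^ 2 ≤ (inner ℂ (B x) x : ℂ).re)
    (hScont : Continuous S)
    (hSsym : ∀ x y : H, (inner ℂ (S x) y : ℂ) = inner ℂ x (S y))
    (hSpos : ∀ x : H, 0 ≤ (inner ℂ (S x) x : ℂ).re)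
    (hSmem : ∀ x : H, S (S x) ∈ dB)
    (hSinvr : ∀ x : H, B (S (S x)) = x)
    (hSinvl : ∀ x ∈ dB, S (S (B x)) = x) :
    pencilw A B dA =
        {z : ℂ | ∃ y : H, S y ∈ dA ∧ ‖y‖ = 1 ∧ z = (inner ℂ (S (A (S y))) y : ℂ)} ∧
      Convex ℝ (pencilw A B dA) := by
  have hEq := seteq A B S dA dB hAB hSsym hSinvr hSinvl
  refine ⟨hEq, ?_⟩
  rw [hEq]
  exact numRange_convex (S ∘ₗ A ∘ₗ S) (dA.comap S)
end

section
/- In ℓ²(ℕ), let A = diag(n² + n : n ∈ ℕ) and B = diag(n² : n ∈ ℕ) be the selfadjoint diagonal operators with respect to the standard orthonormal basis. Then w(A,B) = (1,2], the half-open real interval. -/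
open Filter Topology
open scoped ENNReal

private lemma stmt5_arith {M r t : ℝ} (hd : M ^ 2 * (r - 1) - M ≠ 0)
    (ht : t = (2 - r) / (M ^ 2 * (r - 1) - M)) :
    2 + (M ^ 2 + M) * t = r * (1 + M ^ 2 * t) := by
  have htd : t * (M ^ 2 * (r - 1) - M) = 2 - r := by
    rw [ht]; exact div_mul_cancel₀ _ hd
  linear_combination (-1 : ℝ) * htd

/-- For the diagonal operators `A = diag((n+1)² + (n+1))` and `B = diag((n+1)²)` in `ℓ²(ℕ)`
(indexed so that the entries run over `n = 1, 2, …`), the pencil numerical range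
`w(A,B) = {⟨Ax,x⟩/⟨Bx,x⟩ : x ∈ dom A, ⟨Bx,x⟩ ≠ 0}` equals the interval `(1, 2]`. -/
theorem stmt_5 :
    {z : ℂ | ∃ x : lp (fun _ : ℕ => ℂ) 2,
        Memℓp (fun n : ℕ => (((n : ℂ) + 1) ^ 2 + ((n : ℂ) + 1)) * x n) 2 ∧
        (∑' n : ℕ, ((n : ℂ) + 1) ^ 2 * (‖x n‖ ^ 2 : ℂ)) ≠ 0 ∧
        z = (∑' n : ℕ, (((n : ℂ) + 1) ^ 2 + ((n : ℂ) + 1)) * (‖x n‖ ^ 2 : ℂ)) /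
            (∑' n : ℕ, ((n : ℂ) + 1) ^ 2 * (‖x n‖ ^ 2 : ℂ))} =
      {z : ℂ | ∃ r ∈ Set.Ioc (1 : ℝ) 2, z = (r : ℂ)} := by
  ext z
  simp only [Set.mem_setOf_eq, Set.mem_Ioc]
  constructor
  · rintro ⟨x, hmem, hden, rfl⟩
    set w : ℕ → ℝ := fun n => ‖x n‖ ^ 2 with hw
    have hwnn : ∀ n, 0 ≤ w n := fun n => by positivity
    have hc1 : ∀ n : ℕ, (1 : ℝ) ≤ ((n : ℝ) + 1) ^ 2 + ((n : ℝ) + 1) := by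
      intro n
      have : (0 : ℝ) ≤ (n : ℝ) := Nat.cast_nonneg n
      nlinarith
    -- summability of the dominating series
    have hsum2 : Summable (fun n : ℕ => (((n : ℝ) + 1) ^ 2 + ((n : ℝ) + 1)) ^ 2 * w n) := by
      have h := hmem.summable (by norm_num)
      refine h.congr fun n => ?_
      have h2 : ((2 : ℝ≥0∞)).toReal = (2 : ℝ) := by norm_num
      rw [h2, Real.rpow_two, norm_mul, mul_pow]
      congr 1
      have : (((n : ℂ) + 1) ^ 2 + ((n : ℂ) + 1)) =
          (((((n : ℝ) + 1) ^ 2 + ((n : ℝ) + 1)) : ℝ) : ℂ) := by push_cast; ring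
      rw [this, Complex.norm_real, Real.norm_eq_abs, sq_abs]
    have hdom : ∀ (g : ℕ → ℝ), (∀ n, 0 ≤ g n) →
        (∀ n, g n ≤ (((n : ℝ) + 1) ^ 2 + ((n : ℝ) + 1)) ^ 2) →
        Summable (fun n => g n * w n) := by
      intro g hg hgle
      refine Summable.of_nonneg_of_le (fun n => mul_nonneg (hg n) (hwnn n))
        (fun n => mul_le_mul_of_nonneg_right (hgle n) (hwnn n)) hsum2
    have hu : Summable (fun n : ℕ => (((n : ℝ) + 1) ^ 2 + ((n : ℝ) + 1)) * w n) :=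
      hdom _ (fun n => by have := hc1 n; nlinarith) (fun n => by have := hc1 n; nlinarith)
    have hv : Summable (fun n : ℕ => ((n : ℝ) + 1) ^ 2 * w n) :=
      hdom _ (fun n => by positivity) (fun n => by have := hc1 n; nlinarith)
    have htt : Summable (fun n : ℕ => ((n : ℝ) + 1) * w n) :=
      hdom _ (fun n => by positivity) (fun n => by have := hc1 n; nlinarith)
    -- rewrite the complex tsums as real ones
    have hnum : (∑' n : ℕ, (((n : ℂ) + 1) ^ 2 + ((n : ℂ) + 1)) * (‖x n‖ ^ 2 : ℂ)) =
        (((∑' n : ℕ, (((n : ℝ) + 1) ^ 2 + ((n : ℝ) + 1)) * w n) : ℝ) : ℂ) := by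
      rw [Complex.ofReal_tsum]
      refine tsum_congr fun n => ?_
      simp only [hw]
      push_cast; ring
    have hden' : (∑' n : ℕ, ((n : ℂ) + 1) ^ 2 * (‖x n‖ ^ 2 : ℂ)) =
        (((∑' n : ℕ, ((n : ℝ) + 1) ^ 2 * w n) : ℝ) : ℂ) := by
      rw [Complex.ofReal_tsum]
      refine tsum_congr fun n => ?_
      simp only [hw]
      push_cast; ring
    set D : ℝ := ∑' n : ℕ, ((n : ℝ) + 1) ^ 2 * w n with hD
    have hDne : D ≠ 0 := by
      intro h; apply hden; rw [hden', h]; simp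
    have hDpos : 0 < D := lt_of_le_of_ne (tsum_nonneg fun n => mul_nonneg (by positivity) (hwnn n))
      (Ne.symm hDne)
    -- get a coordinate with positive weight
    have hex : ∃ n, 0 < w n := by
      by_contra h
      push_neg at h
      have : ∀ n, w n = 0 := fun n => le_antisymm (h n) (hwnn n)
      apply hDne
      have hz : (fun n : ℕ => ((n : ℝ) + 1) ^ 2 * w n) = fun _ => (0 : ℝ) :=
        funext fun n => by rw [this n]; ring
      rw [hD, hz, tsum_zero]
    obtain ⟨n₀, hn₀⟩ := hex
    set T : ℝ := ∑' n : ℕ, ((n : ℝ) + 1) * w n with hT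
    have hTpos : 0 < T :=
      Summable.tsum_pos htt (fun n => mul_nonneg (by positivity) (hwnn n)) n₀
        (mul_pos (by positivity) hn₀)
    have hTleD : T ≤ D := by
      refine Summable.tsum_le_tsum (fun n => ?_) htt hv
      have h1 : (1 : ℝ) ≤ (n : ℝ) + 1 := by
        have : (0 : ℝ) ≤ (n : ℝ) := Nat.cast_nonneg n
        linarith
      have h2 : (n : ℝ) + 1 ≤ ((n : ℝ) + 1) ^ 2 := by nlinarith
      exact mul_le_mul_of_nonneg_right h2 (hwnn n)
    have hsplit : (∑' n : ℕ, (((n : ℝ) + 1) ^ 2 + ((n : ℝ) + 1)) * w n) = D + T := by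
      rw [hD, hT, ← Summable.tsum_add hv htt]
      exact tsum_congr fun n => by ring
    refine ⟨(D + T) / D, ⟨?_, ?_⟩, ?_⟩
    · rw [lt_div_iff₀ hDpos]; linarith
    · rw [div_le_iff₀ hDpos]; linarith
    · rw [hnum, hden', hsplit, Complex.ofReal_div]
  · rintro ⟨r, ⟨hr1, hr2⟩, rfl⟩
    have hr1' : 0 < r - 1 := by linarith
    obtain ⟨m, hm⟩ := exists_nat_gt (1 / (r - 1))
    have hm1 : (1 : ℝ) ≤ 1 / (r - 1) := by
      rw [le_div_iff₀ hr1']; linarith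
    have hMgt1 : (1 : ℝ) < (m : ℝ) := lt_of_le_of_lt hm1 hm
    have hm0 : m ≠ 0 := by
      rintro rfl; norm_num at hMgt1
    set M : ℝ := (m : ℝ) + 1 with hMdef
    have hM1 : 1 < M := by rw [hMdef]; linarith
    have hMr : 1 < M * (r - 1) := by
      have : 1 / (r - 1) < M := by rw [hMdef]; linarith
      rw [div_lt_iff₀ hr1'] at this; linarith
    have hdpos : 0 < M ^ 2 * (r - 1) - M := by nlinarith
    set t : ℝ := (2 - r) / (M ^ 2 * (r - 1) - M) with htdef
    have ht0 : 0 ≤ t := div_nonneg (by linarith) hdpos.le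
    set x : lp (fun _ : ℕ => ℂ) 2 :=
      lp.single 2 0 (1 : ℂ) + lp.single 2 m ((Real.sqrt t : ℝ) : ℂ) with hxdef
    have hx : ∀ n : ℕ, (x : ∀ _ : ℕ, ℂ) n =
        if n = 0 then 1 else if n = m then ((Real.sqrt t : ℝ) : ℂ) else 0 := by
      intro n
      rw [hxdef, lp.coeFn_add, Pi.add_apply]
      by_cases h0 : n = 0
      · subst h0
        rw [lp.single_apply_self, lp.single_apply_ne 2 m _ (fun h => hm0 h.symm)]
        simp
      · by_cases hmn : n = m
        · subst hmn
          rw [lp.single_apply_self, lp.single_apply_ne 2 0 _ h0]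
          simp [h0]
        · rw [lp.single_apply_ne 2 0 _ h0, lp.single_apply_ne 2 m _ hmn]
          simp [h0, hmn]
    -- uniform tsum computation
    have htsum : ∀ c : ℕ → ℂ, (∑' n : ℕ, c n * (‖x n‖ ^ 2 : ℂ)) = c 0 + c m * (t : ℂ) := by
      intro c
      rw [tsum_eq_sum (s := ({0, m} : Finset ℕ)) (fun n hn => ?_)]
      · rw [Finset.sum_pair (fun h => hm0 h.symm)]
        have h0 : (x : ∀ _ : ℕ, ℂ) 0 = 1 := by rw [hx]; simp
        have hmm : (x : ∀ _ : ℕ, ℂ) m = ((Real.sqrt t : ℝ) : ℂ) := by rw [hx]; simp [hm0]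
        rw [h0, hmm]
        have : ‖((Real.sqrt t : ℝ) : ℂ)‖ = Real.sqrt t := by
          rw [Complex.norm_real, Real.norm_eq_abs, abs_of_nonneg (Real.sqrt_nonneg t)]
        rw [this]
        have hsq : (Real.sqrt t : ℝ) ^ 2 = t := Real.sq_sqrt ht0
        simp only [norm_one]
        rw [show ((Real.sqrt t : ℝ) : ℂ) ^ 2 = ((t : ℝ) : ℂ) from by
          rw [← Complex.ofReal_pow, hsq]]
        norm_num
      · simp only [Finset.mem_insert, Finset.mem_singleton, not_or] at hn
        have : (x : ∀ _ : ℕ, ℂ) n = 0 := by rw [hx]; simp [hn.1, hn.2]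
        rw [this]
        simp
    refine ⟨x, ?_, ?_, ?_⟩
    · -- Memℓp
      apply memℓp_gen
      refine summable_of_ne_finset_zero (s := ({0, m} : Finset ℕ)) fun n hn => ?_
      simp only [Finset.mem_insert, Finset.mem_singleton, not_or] at hn
      have : (x : ∀ _ : ℕ, ℂ) n = 0 := by rw [hx]; simp [hn.1, hn.2]
      rw [this, mul_zero, norm_zero, Real.zero_rpow (by norm_num)]
    · rw [htsum]
      have : ((0 : ℕ) : ℂ) + 1 = 1 := by norm_num
      push_cast
      have heq : ((0 : ℂ) + 1) ^ 2 + ((m : ℂ) + 1) ^ 2 * (t : ℂ) = ((1 + M ^ 2 * t : ℝ) : ℂ) := by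
        push_cast [hMdef]; ring
      rw [heq]
      refine Complex.ofReal_ne_zero.mpr ?_
      nlinarith
    · rw [htsum, htsum]
      have hnum : (((0 : ℕ) : ℂ) + 1) ^ 2 + (((0 : ℕ) : ℂ) + 1) +
          ((((m : ℕ) : ℂ) + 1) ^ 2 + (((m : ℕ) : ℂ) + 1)) * (t : ℂ) =
          ((2 + (M ^ 2 + M) * t : ℝ) : ℂ) := by
        push_cast [hMdef]; ring
      have hden2 : (((0 : ℕ) : ℂ) + 1) ^ 2 + (((m : ℕ) : ℂ) + 1) ^ 2 * (t : ℂ) =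
          ((1 + M ^ 2 * t : ℝ) : ℂ) := by
        push_cast [hMdef]; ring
      rw [hnum, hden2, ← Complex.ofReal_div]
      congr 1
      have harith := stmt5_arith hdpos.ne' htdef
      have hdpos2 : (0 : ℝ) < 1 + M ^ 2 * t := by nlinarith
      rw [harith, mul_div_assoc, div_self hdpos2.ne', mul_one]
end

section
/- Let A be a linear operator and B ∈ L(H) a bounded operator on a Hilbert space H with 0 ∉ closure(W(B)). Let Ω ⊆ ℂ \ W(A,B) be a connected set with Ω ∩ ρ(A,B) ≠ ∅. Then Ω ⊆ ρ(A,B) and for all λ ∈ Ω, ‖(A − λB)⁻¹‖ ≤ 1 / ( dist(0, W(B)) · dist(λ, W(A,B)) ). -/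
open Filter Topology

variable {H : Type*} [NormedAddCommGroup H] [InnerProductSpace ℂ H] [CompleteSpace H]

/-- The numerical range of a bounded operator `B`. -/
def numRangeCLM (B : H →L[ℂ] H) : Set ℂ := {z | ∃ x : H, ‖x‖ = 1 ∧ z = (inner ℂ (B x) x : ℂ)}

/-- The resolvent set of the pencil `λ ↦ A - λB`: those `λ` for which `A - λB` has a bounded
everywhere-defined inverse. -/
def pencilRes (A : H →ₗ[ℂ] H) (B : H →L[ℂ] H) (dA : Submodule ℂ H) : Set ℂ :=
  {lam : ℂ | ∃ R : H →L[ℂ] H, (∀ y, R y ∈ dA) ∧ (∀ y, A (R y) - lam • B (R y) = y) ∧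
    (∀ x ∈ dA, R (A x - lam • B x) = x)}

/-! For `x ∈ dom A` with `b = ⟨Bx, x⟩ ≠ 0`, the point `μ = conj (⟨Ax, x⟩ / b)` lies in `W(A,B)`
(the conjugate appears because Mathlib's inner product is conjugate-linear in its first slot), and
`⟨(A - λB)x, x⟩ = conj (μ - λ) b`. Since `|b| ≥ dist(0, W(B)) ‖x‖²`, this gives the lower bound
`‖(A - λB)x‖ ≥ dist(0, W(B)) dist(λ, W(A,B)) ‖x‖`, hence the resolvent estimate at every point of
`ρ(A,B)`. The estimate is locally uniform off the closed set `W(A,B)`, so a Neumann series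
perturbation shows that `Ω ∩ ρ(A,B)` is both open and relatively closed in `Ω`. -/

open Metric ComplexConjugate

section InverseOn

variable {𝕜 E F : Type*} [NontriviallyNormedField 𝕜] [NormedAddCommGroup E] [NormedSpace 𝕜 E]
  [NormedAddCommGroup F] [NormedSpace 𝕜 F]

def IsInverseOn (L : E →ₗ[𝕜] F) (d : Submodule 𝕜 E) (R : F →L[𝕜] E) : Prop :=
  (∀ y, R y ∈ d) ∧ (∀ y, L (R y) = y) ∧ ∀ x ∈ d, R (L x) = x

theorem IsInverseOn.norm_le_one_div {L : E →ₗ[𝕜] F} {d : Submodule 𝕜 E} {R : F →L[𝕜] E}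
    (hR : IsInverseOn L d R) {c : ℝ} (hc : 0 < c) (hL : ∀ x ∈ d, c * ‖x‖ ≤ ‖L x‖) :
    ‖R‖ ≤ 1 / c := by
  refine R.opNorm_le_bound (by positivity) fun y => ?_
  have := hL (R y) (hR.1 y)
  rw [hR.2.1 y] at this
  rw [div_mul_eq_mul_div, le_div_iff₀ hc]
  linarith

theorem IsInverseOn.exists_sub [CompleteSpace F] {L : E →ₗ[𝕜] F} {d : Submodule 𝕜 E}
    {R : F →L[𝕜] E} (hR : IsInverseOn L d R) {P : E →L[𝕜] F} (hP : ‖P‖ * ‖R‖ < 1) :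
    ∃ R' : F →L[𝕜] E, IsInverseOn (L - (P : E →ₗ[𝕜] F)) d R' := by
  obtain ⟨hRd, hLR, hRL⟩ := hR
  -- `(L - P) ∘ R = 1 - P ∘ R`, which is invertible by the Neumann series
  set U := Units.oneSub (P.comp R) ((P.opNorm_comp_le R).trans_lt hP)
  have hU : ∀ y, (U : F →L[𝕜] F) y = y - P (R y) := fun y => rfl
  have hLPR : ∀ y, (L - (P : E →ₗ[𝕜] F)) (R y) = (U : F →L[𝕜] F) y := by
    intro y; simp [hU, hLR]
  refine ⟨R.comp (↑U⁻¹ : F →L[𝕜] F), fun y => hRd _, fun y => ?_, fun x hx => ?_⟩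
  · rw [R.comp_apply, hLPR, ← mul_apply_eq_comp, U.mul_inv, one_apply_eq_self]
  · have : (L - (P : E →ₗ[𝕜] F)) x = (U : F →L[𝕜] F) (L x) := by
      rw [← hLPR, hRL x hx]
    rw [R.comp_apply, this, ← mul_apply_eq_comp, U.inv_mul, one_apply_eq_self, hRL x hx]

end InverseOn

section NumericalRange

variable {E : Type*} [NormedAddCommGroup E] [InnerProductSpace ℂ E]

theorem inv_sq_norm_mul_inner_mem_numRange (T : E →ₗ[ℂ] E) {d : Submodule ℂ E} {x : E}
    (hx : x ∈ d) (hx0 : x ≠ 0) :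
    ((‖x‖ : ℂ) ^ 2)⁻¹ * inner ℂ (T x) x ∈ numRange T d := by
  refine ⟨(‖x‖ : ℂ)⁻¹ • x, d.smul_mem _ hx, norm_smul_inv_norm hx0, ?_⟩
  simp only [map_smul, inner_smul_left, inner_smul_right, map_inv₀, Complex.conj_ofReal]
  ring

theorem numRangeCLM_eq_numRange (B : E →L[ℂ] E) :
    numRangeCLM B = numRange (B : E →ₗ[ℂ] E) ⊤ := by
  ext z
  simp [numRangeCLM, numRange]

theorem numRangeCLM_nonempty [Nontrivial E] (B : E →L[ℂ] E) : (numRangeCLM B).Nonempty := by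
  obtain ⟨x, hx⟩ := exists_norm_eq E zero_le_one
  exact ⟨_, x, hx, rfl⟩

theorem inner_ne_zero_of_zero_notMem_numRangeCLM {B : E →L[ℂ] E} (hB : (0 : ℂ) ∉ numRangeCLM B)
    {x : E} (hx : x ≠ 0) : inner ℂ (B x) x ≠ 0 := by
  intro h
  have := inv_sq_norm_mul_inner_mem_numRange (B : E →ₗ[ℂ] E) (Submodule.mem_top (x := x)) hx
  rw [ContinuousLinearMap.coe_coe, h, mul_zero, ← numRangeCLM_eq_numRange] at this
  exact hB this

theorem infDist_numRangeCLM_mul_sq_le (B : E →L[ℂ] E) (x : E) :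
    infDist 0 (numRangeCLM B) * ‖x‖ ^ 2 ≤ ‖inner ℂ (B x) x‖ := by
  rcases eq_or_ne x 0 with rfl | hx0
  · simp
  have hmem := inv_sq_norm_mul_inner_mem_numRange (B : E →ₗ[ℂ] E) (Submodule.mem_top (x := x)) hx0
  rw [ContinuousLinearMap.coe_coe, ← numRangeCLM_eq_numRange] at hmem
  have := infDist_le_dist_of_mem (x := 0) hmem
  rw [dist_zero_left, norm_mul, norm_inv, norm_pow, Complex.norm_real, norm_norm] at this
  rwa [← le_div_iff₀ (by positivity), div_eq_inv_mul]

end NumericalRange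

section PencilNumericalRange

variable {E : Type*} [NormedAddCommGroup E] [InnerProductSpace ℂ E]

theorem inner_sub_smul_apply (A B : E →ₗ[ℂ] E) (lam : ℂ) (x : E) :
    inner ℂ ((A - lam • B) x) x = inner ℂ (A x) x - conj lam * inner ℂ (B x) x := by
  simp [mul_comm]

theorem conj_div_mem_pencilW (A B : E →ₗ[ℂ] E) {dA : Submodule ℂ E} {x : E} (hx : x ∈ dA)
    (hb : inner ℂ (B x) x ≠ 0) :
    conj (inner ℂ (A x) x / inner ℂ (B x) x) ∈ pencilW A B dA := by
  have hx0 : x ≠ 0 := by rintro rfl; simp at hb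
  refine subset_closure ?_
  convert inv_sq_norm_mul_inner_mem_numRange _ hx hx0
  rw [inner_sub_smul_apply, Complex.conj_conj, div_mul_cancel₀ _ hb, sub_self, mul_zero]

theorem infDist_mul_infDist_mul_norm_le (A : E →ₗ[ℂ] E) (B : E →L[ℂ] E) {dA : Submodule ℂ E}
    (lam : ℂ) {x : E} (hx : x ∈ dA) :
    infDist 0 (numRangeCLM B) * infDist lam (pencilW A (B : E →ₗ[ℂ] E) dA) * ‖x‖ ≤
      ‖A x - lam • B x‖ := by
  set β := infDist 0 (numRangeCLM B)
  set δ := infDist lam (pencilW A (B : E →ₗ[ℂ] E) dA)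
  rcases eq_or_ne x 0 with rfl | hx0
  · simp
  have hβ := infDist_numRangeCLM_mul_sq_le B x
  suffices β * δ * ‖x‖ * ‖x‖ ≤ ‖A x - lam • B x‖ * ‖x‖ from
    le_of_mul_le_mul_right this (norm_pos_iff.2 hx0)
  by_cases hb : inner ℂ (B x) x = 0
  · rw [hb, norm_zero] at hβ
    have : β * δ * ‖x‖ * ‖x‖ = δ * (β * ‖x‖ ^ 2) := by ring
    nlinarith [infDist_nonneg (x := lam) (s := pencilW A (B : E →ₗ[ℂ] E) dA), norm_nonneg x,
      norm_nonneg (A x - lam • B x)]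
  set μ := conj (inner ℂ (A x) x / inner ℂ (B x) x)
  have hδ : δ ≤ ‖lam - μ‖ := by
    rw [← dist_eq_norm]
    exact infDist_le_dist_of_mem (conj_div_mem_pencilW A B hx hb)
  have hinner : inner ℂ (A x - lam • B x) x = conj (μ - lam) * inner ℂ (B x) x := by
    have := inner_sub_smul_apply A B lam x
    simp only [LinearMap.sub_apply, LinearMap.smul_apply, ContinuousLinearMap.coe_coe] at this
    rw [this, map_sub, Complex.conj_conj, sub_mul, div_mul_cancel₀ _ hb]
  calc β * δ * ‖x‖ * ‖x‖ = δ * (β * ‖x‖ ^ 2) := by ring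
    _ ≤ ‖lam - μ‖ * ‖inner ℂ (B x) x‖ :=
        mul_le_mul hδ hβ (mul_nonneg infDist_nonneg (sq_nonneg _)) (norm_nonneg _)
    _ = ‖inner ℂ (A x - lam • B x) x‖ := by rw [hinner, norm_mul, Complex.norm_conj, norm_sub_rev]
    _ ≤ ‖A x - lam • B x‖ * ‖x‖ := norm_inner_le_norm _ _

theorem pencilW_isClosed (A : E →ₗ[ℂ] E) (B : E →L[ℂ] E) (dA : Submodule ℂ E) :
    IsClosed (pencilW A (B : E →ₗ[ℂ] E) dA) := by
  refine isClosed_of_closure_subset fun lam hlam => Metric.mem_closure_iff.2 fun ε hε => ?_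
  obtain ⟨μ, hμW, hμ⟩ := Metric.mem_closure_iff.1 hlam (ε / (2 * (‖B‖ + 1))) (by positivity)
  obtain ⟨_, ⟨x, hx, hx1, rfl⟩, hz⟩ := Metric.mem_closure_iff.1 hμW (ε / 2) (by positivity)
  refine ⟨_, ⟨x, hx, hx1, rfl⟩, ?_⟩
  have hBx : ‖inner ℂ (B x) x‖ ≤ ‖B‖ := by
    simpa [hx1] using (norm_inner_le_norm (𝕜 := ℂ) (B x) x).trans
      (mul_le_mul_of_nonneg_right (B.le_opNorm x) (norm_nonneg x))
  have hsplit : inner ℂ ((A - lam • (B : E →ₗ[ℂ] E)) x) x =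
      inner ℂ ((A - μ • (B : E →ₗ[ℂ] E)) x) x + conj (μ - lam) * inner ℂ (B x) x := by
    rw [inner_sub_smul_apply, inner_sub_smul_apply, map_sub]
    simp only [ContinuousLinearMap.coe_coe]
    ring
  have hsmall : ‖μ - lam‖ * ‖B‖ ≤ ε / 2 := by
    rw [← dist_eq_norm, dist_comm]
    calc dist lam μ * ‖B‖ ≤ ε / (2 * (‖B‖ + 1)) * (‖B‖ + 1) := by gcongr; linarith
      _ = ε / 2 := by field_simp
  rw [dist_zero_left] at hz ⊢
  calc ‖inner ℂ ((A - lam • (B : E →ₗ[ℂ] E)) x) x‖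
      ≤ ‖inner ℂ ((A - μ • (B : E →ₗ[ℂ] E)) x) x‖ + ‖μ - lam‖ * ‖inner ℂ (B x) x‖ := by
        rw [hsplit, ← Complex.norm_conj (μ - lam), ← norm_mul]
        exact norm_add_le _ _
    _ < ε / 2 + ε / 2 :=
        add_lt_add_of_lt_of_le hz ((mul_le_mul_of_nonneg_left hBx (norm_nonneg _)).trans hsmall)
    _ = ε := add_halves ε

theorem pencilW_nonempty_of_mem_pencilRes [Nontrivial E] (A : E →ₗ[ℂ] E) {B : E →L[ℂ] E}
    {dA : Submodule ℂ E} (hB : (0 : ℂ) ∉ numRangeCLM B) {lam : ℂ}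
    (hlam : lam ∈ pencilRes A B dA) : (pencilW A (B : E →ₗ[ℂ] E) dA).Nonempty := by
  obtain ⟨R, hRd, hAR, -⟩ := hlam
  obtain ⟨y, hy⟩ := exists_ne (0 : E)
  have hx0 : R y ≠ 0 := fun h => hy (by simpa [h] using (hAR y).symm)
  exact ⟨_, conj_div_mem_pencilW A B (hRd y) (inner_ne_zero_of_zero_notMem_numRangeCLM hB hx0)⟩

theorem mem_pencilRes_iff {A : E →ₗ[ℂ] E} {B : E →L[ℂ] E} {dA : Submodule ℂ E} {lam : ℂ} :
    lam ∈ pencilRes A B dA ↔ ∃ R, IsInverseOn (A - lam • (B : E →ₗ[ℂ] E)) dA R :=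
  Iff.rfl

theorem IsInverseOn.norm_le_one_div_infDist_mul_infDist {A : E →ₗ[ℂ] E} {B : E →L[ℂ] E}
    {dA : Submodule ℂ E} {lam : ℂ} {R : E →L[ℂ] E}
    (hR : IsInverseOn (A - lam • (B : E →ₗ[ℂ] E)) dA R)
    (hpos : 0 < infDist 0 (numRangeCLM B) * infDist lam (pencilW A (B : E →ₗ[ℂ] E) dA)) :
    ‖R‖ ≤ 1 / (infDist 0 (numRangeCLM B) * infDist lam (pencilW A (B : E →ₗ[ℂ] E) dA)) :=
  hR.norm_le_one_div hpos fun _ hx => infDist_mul_infDist_mul_norm_le A B lam hx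

end PencilNumericalRange

section PencilResolvent

variable {A : H →ₗ[ℂ] H} {B : H →L[ℂ] H} {dA : Submodule ℂ H}

theorem mem_pencilRes_of_isInverseOn {lam μ : ℂ} {R : H →L[ℂ] H}
    (hR : IsInverseOn (A - lam • (B : H →ₗ[ℂ] H)) dA R) (h : ‖μ - lam‖ * ‖B‖ * ‖R‖ < 1) :
    μ ∈ pencilRes A B dA := by
  have hsplit : A - μ • (B : H →ₗ[ℂ] H) =
      (A - lam • (B : H →ₗ[ℂ] H)) - (((μ - lam) • B : H →L[ℂ] H) : H →ₗ[ℂ] H) := by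
    ext x
    simp [sub_smul]
  rw [mem_pencilRes_iff, hsplit]
  exact hR.exists_sub (by rwa [norm_smul])

theorem pencilRes_isOpen : IsOpen (pencilRes A B dA) := by
  refine isOpen_iff_mem_nhds.2 fun lam hlam => ?_
  obtain ⟨R, hR⟩ := mem_pencilRes_iff.1 hlam
  have hcont : ContinuousAt (fun μ : ℂ => ‖μ - lam‖ * ‖B‖ * ‖R‖) lam := by fun_prop
  filter_upwards [hcont.eventually_lt (continuousAt_const (y := 1)) (by simp)] with μ hμ
  exact mem_pencilRes_of_isInverseOn hR hμ

theorem mem_pencilRes_of_norm_mul_lt {lam μ : ℂ} (hμ : μ ∈ pencilRes A B dA)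
    (h : ‖lam - μ‖ * ‖B‖ <
      infDist 0 (numRangeCLM B) * infDist μ (pencilW A (B : H →ₗ[ℂ] H) dA)) :
    lam ∈ pencilRes A B dA := by
  obtain ⟨R, hR⟩ := mem_pencilRes_iff.1 hμ
  have hpos := (mul_nonneg (norm_nonneg _) (norm_nonneg _)).trans_lt h
  refine mem_pencilRes_of_isInverseOn hR ?_
  calc ‖lam - μ‖ * ‖B‖ * ‖R‖ ≤ ‖lam - μ‖ * ‖B‖ *
        (1 / (infDist 0 (numRangeCLM B) * infDist μ (pencilW A (B : H →ₗ[ℂ] H) dA))) := by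
        gcongr
        exact hR.norm_le_one_div_infDist_mul_infDist hpos
    _ < 1 := by rwa [mul_one_div, div_lt_one hpos]

theorem mem_pencilRes_of_mem_closure {lam : ℂ}
    (hpos : 0 < infDist 0 (numRangeCLM B) * infDist lam (pencilW A (B : H →ₗ[ℂ] H) dA))
    (hlam : lam ∈ closure (pencilRes A B dA)) : lam ∈ pencilRes A B dA := by
  have hev : ∀ᶠ μ in 𝓝 lam, ‖lam - μ‖ * ‖B‖ <
      infDist 0 (numRangeCLM B) * infDist μ (pencilW A (B : H →ₗ[ℂ] H) dA) := by
    refine ContinuousAt.eventually_lt (by fun_prop)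
      ((continuous_infDist_pt _).continuousAt.const_mul _) (by simpa using hpos)
  obtain ⟨μ, hμ, hlt⟩ := ((mem_closure_iff_frequently.1 hlam).and_eventually hev).exists
  exact mem_pencilRes_of_norm_mul_lt hμ hlt

end PencilResolvent

theorem stmt_6_general (A : H →ₗ[ℂ] H) (dA : Submodule ℂ H)
    (B : H →L[ℂ] H) (hB : (0 : ℂ) ∉ closure (numRangeCLM B))
    (Ω : Set ℂ) (hΩconn : IsPreconnected Ω)
    (hΩ : ∀ lam ∈ Ω, lam ∉ pencilW A (B : H →ₗ[ℂ] H) dA)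
    (hρ : (Ω ∩ pencilRes A B dA).Nonempty) :
    Ω ⊆ pencilRes A B dA ∧
    ∀ lam ∈ Ω, ∀ R : H →L[ℂ] H,
      ((∀ y, R y ∈ dA) ∧ (∀ y, A (R y) - lam • B (R y) = y) ∧
        (∀ x ∈ dA, R (A x - lam • B x) = x)) →
      ‖R‖ ≤ 1 / (Metric.infDist 0 (numRangeCLM B) *
        Metric.infDist lam (pencilW A (B : H →ₗ[ℂ] H) dA)) := by
  rcases subsingleton_or_nontrivial H with hH | hH
  · refine ⟨fun lam _ => ⟨0, fun _ => by simp, fun _ => Subsingleton.elim _ _,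
      fun _ _ => Subsingleton.elim _ _⟩, fun lam _ R _ => ?_⟩
    rw [Subsingleton.elim R 0, norm_zero]
    exact one_div_nonneg.2 (mul_nonneg infDist_nonneg infDist_nonneg)
  have hβ : 0 < infDist 0 (numRangeCLM B) :=
    (infDist_pos_iff_notMem_closure (numRangeCLM_nonempty B)).1 hB
  have hW : (pencilW A (B : H →ₗ[ℂ] H) dA).Nonempty :=
    pencilW_nonempty_of_mem_pencilRes A (fun h => hB (subset_closure h)) hρ.some_mem.2
  have hpos : ∀ lam ∈ Ω,
      0 < infDist 0 (numRangeCLM B) * infDist lam (pencilW A (B : H →ₗ[ℂ] H) dA) := by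
    intro lam hlam
    refine mul_pos hβ ((infDist_pos_iff_notMem_closure hW).1 ?_)
    rw [(pencilW_isClosed A B dA).closure_eq]
    exact hΩ lam hlam
  exact ⟨hΩconn.subset_of_closure_inter_subset pencilRes_isOpen hρ
      fun lam ⟨hcl, hlam⟩ => mem_pencilRes_of_mem_closure (hpos lam hlam) hcl,
    fun lam hlam _ hR => IsInverseOn.norm_le_one_div_infDist_mul_infDist hR (hpos lam hlam)⟩

/-- If `B` is bounded with `0 ∉ closure W(B)`, `Ω ⊆ ℂ \ W(A,B)` is connected with
`Ω ∩ ρ(A,B) ≠ ∅`, then `Ω ⊆ ρ(A,B)` and the resolvent norm bound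
`‖(A - λB)⁻¹‖ ≤ 1/(dist(0,W(B)) dist(λ, W(A,B)))` holds on `Ω`. -/
theorem stmt_6 (A : H →ₗ[ℂ] H) (dA : Submodule ℂ H)
    (hAclosed : IsClosed {p : H × H | p.1 ∈ dA ∧ p.2 = A p.1})
    (B : H →L[ℂ] H) (hB : (0 : ℂ) ∉ closure (numRangeCLM B))
    (Ω : Set ℂ) (hΩconn : IsPreconnected Ω)
    (hΩ : ∀ lam ∈ Ω, lam ∉ pencilW A (B : H →ₗ[ℂ] H) dA)
    (hρ : (Ω ∩ pencilRes A B dA).Nonempty) :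
    Ω ⊆ pencilRes A B dA ∧
    ∀ lam ∈ Ω, ∀ R : H →L[ℂ] H,
      ((∀ y, R y ∈ dA) ∧ (∀ y, A (R y) - lam • B (R y) = y) ∧
        (∀ x ∈ dA, R (A x - lam • B x) = x)) →
      ‖R‖ ≤ 1 / (Metric.infDist 0 (numRangeCLM B) *
        Metric.infDist lam (pencilW A (B : H →ₗ[ℂ] H) dA)) :=
  stmt_6_general A dA B hB Ω hΩconn hΩ hρ
end

section
/- The pencil essential numerical range w_e(A,B) is a closed subset of ℂ, for any linear operators A, B in a Hilbert space with dom(A) ⊆ dom(B). -/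
open Filter Topology

variable {H : Type*} [NormedAddCommGroup H] [InnerProductSpace ℂ H] [CompleteSpace H]

open Finset in
private lemma almost_orth_weak_null (z : ℕ → H) (hz : ∀ n, ‖z n‖ = 1)
    (horth : ∀ k n, k < n → ‖(inner ℂ (z k) (z n) : ℂ)‖ ≤ (1/4 : ℝ) ^ n) (y : H) :
    Tendsto (fun n => (inner ℂ y (z n) : ℂ)) atTop (𝓝 0) := by
  set c : ℕ → ℂ := fun n => inner ℂ y (z n) with hc
  have hcy : ∀ n, ‖c n‖ ≤ ‖y‖ := by
    intro n
    calc ‖c n‖ ≤ ‖y‖ * ‖z n‖ := norm_inner_le_norm _ _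
    _ = ‖y‖ := by rw [hz n, mul_one]
  -- inner ℂ product bound for all pairs m ≠ n
  have hpair : ∀ m n : ℕ, m ≠ n → ‖(inner ℂ (z m) (z n) : ℂ)‖ ≤ (1/2:ℝ)^m * (1/2)^n := by
    intro m n hmn
    rcases lt_or_gt_of_ne hmn with h | h
    · calc ‖(inner ℂ (z m) (z n) : ℂ)‖ ≤ (1/4:ℝ)^n := horth m n h
      _ = (1/2:ℝ)^n * (1/2)^n := by rw [← mul_pow]; norm_num
      _ ≤ (1/2:ℝ)^m * (1/2)^n := by
          exact mul_le_mul_of_nonneg_right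
            (pow_le_pow_of_le_one (by norm_num) (by norm_num) h.le) (by positivity)
    · have : ‖(inner ℂ (z m) (z n) : ℂ)‖ = ‖(inner ℂ (z n) (z m) : ℂ)‖ := by
        rw [← inner_conj_symm]; exact (RCLike.norm_conj _)
      rw [this]
      calc ‖(inner ℂ (z n) (z m) : ℂ)‖ ≤ (1/4:ℝ)^m := horth n m h
      _ = (1/2:ℝ)^m * (1/2)^m := by rw [← mul_pow]; norm_num
      _ ≤ (1/2:ℝ)^m * (1/2)^n := by
          exact mul_le_mul_of_nonneg_left
            (pow_le_pow_of_le_one (by norm_num) (by norm_num) h.le) (by positivity)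
  have claim : ∀ N : ℕ, ∑ n ∈ range N, ‖c n‖^2 ≤ 3 * ‖y‖^2 := by
    intro N
    set S := ∑ n ∈ range N, ‖c n‖^2 with hSdef
    have hS0 : 0 ≤ S := Finset.sum_nonneg fun n _ => sq_nonneg _
    set w : H := ∑ n ∈ range N, (starRingEnd ℂ) (c n) • z n with hw
    -- Step A : inner ℂ y w = S
    have hA : (inner ℂ y w : ℂ) = (S : ℂ) := by
      rw [hw, inner_sum, hSdef]
      push_cast
      refine Finset.sum_congr rfl fun n _ => ?_
      rw [inner_smul_right]
      exact RCLike.conj_mul (c n)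
    have hSyw : S ≤ ‖y‖ * ‖w‖ := by
      have : ‖(inner ℂ y w : ℂ)‖ = S := by rw [hA]; simpa using hS0
      rw [← this]; exact norm_inner_le_norm _ _
    -- Step B : ‖w‖^2 ≤ S + 4 * ‖y‖^2
    have hB : ‖w‖^2 ≤ S + 4 * ‖y‖^2 := by
      have h1 : ‖w‖^2 = ‖(inner ℂ w w : ℂ)‖ := by
        rw [inner_self_eq_norm_sq_to_K, norm_pow, RCLike.norm_ofReal, abs_norm]
      have h2 : (inner ℂ w w : ℂ) =
          ∑ m ∈ range N, ∑ n ∈ range N, c m * (starRingEnd ℂ) (c n) * inner ℂ (z m) (z n) := by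
        rw [hw, sum_inner]
        refine Finset.sum_congr rfl fun m _ => ?_
        rw [inner_sum]
        refine Finset.sum_congr rfl fun n _ => ?_
        rw [inner_smul_left, inner_smul_right]
        simp [mul_assoc, mul_comm, mul_left_comm]
      have h3 : ‖(inner ℂ w w : ℂ)‖ ≤
          ∑ m ∈ range N, ∑ n ∈ range N, ‖c m‖ * ‖c n‖ * ‖(inner ℂ (z m) (z n) : ℂ)‖ := by
        rw [h2]
        refine (norm_sum_le _ _).trans (Finset.sum_le_sum fun m _ => ?_)
        refine (norm_sum_le _ _).trans (Finset.sum_le_sum fun n _ => ?_)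
        rw [norm_mul, norm_mul, RCLike.norm_conj]
      have h4 : ∑ m ∈ range N, ∑ n ∈ range N, ‖c m‖ * ‖c n‖ * ‖(inner ℂ (z m) (z n) : ℂ)‖ ≤
          S + 4 * ‖y‖^2 := by
        have hpoint : ∀ m ∈ range N, ∀ n ∈ range N,
            ‖c m‖ * ‖c n‖ * ‖(inner ℂ (z m) (z n) : ℂ)‖ ≤
              (if m = n then ‖c n‖^2 else 0) + ‖y‖^2 * ((1/2:ℝ)^m * (1/2)^n) := by
          intro m _ n _
          by_cases hmn : m = n
          · subst hmn
            have hzz : ‖(inner ℂ (z m) (z m) : ℂ)‖ = 1 := by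
              rw [inner_self_eq_norm_sq_to_K, hz m]
              norm_num
            rw [if_pos rfl, hzz, mul_one, ← sq]
            have hpos : (0:ℝ) ≤ ‖y‖^2 * ((1/2:ℝ)^m * (1/2)^m) := by positivity
            linarith
          · simp only [if_neg hmn, zero_add]
            calc ‖c m‖ * ‖c n‖ * ‖(inner ℂ (z m) (z n) : ℂ)‖
                ≤ ‖y‖ * ‖y‖ * ((1/2:ℝ)^m * (1/2)^n) :=
                  mul_le_mul (mul_le_mul (hcy m) (hcy n) (norm_nonneg _) ((norm_nonneg _).trans (hcy m)))
                    (hpair m n hmn) (norm_nonneg _) (by positivity)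
              _ = ‖y‖^2 * ((1/2:ℝ)^m * (1/2)^n) := by ring
        calc ∑ m ∈ range N, ∑ n ∈ range N, ‖c m‖ * ‖c n‖ * ‖(inner ℂ (z m) (z n) : ℂ)‖
            ≤ ∑ m ∈ range N, ∑ n ∈ range N,
              ((if m = n then ‖c n‖^2 else 0) + ‖y‖^2 * ((1/2:ℝ)^m * (1/2)^n)) := by
              exact Finset.sum_le_sum fun m hm => Finset.sum_le_sum fun n hn => hpoint m hm n hn
          _ = (∑ m ∈ range N, ∑ n ∈ range N, (if m = n then ‖c n‖^2 else 0)) +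
              ∑ m ∈ range N, ∑ n ∈ range N, ‖y‖^2 * ((1/2:ℝ)^m * (1/2)^n) := by
              rw [← Finset.sum_add_distrib]
              exact Finset.sum_congr rfl fun m _ => Finset.sum_add_distrib
          _ ≤ S + 4 * ‖y‖^2 := by
              have e1 : (∑ m ∈ range N, ∑ n ∈ range N, (if m = n then ‖c n‖^2 else 0)) = S := by
                rw [hSdef]
                refine Finset.sum_congr rfl fun m hm => ?_
                rw [Finset.sum_ite_eq (range N) m (fun n => ‖c n‖^2)]
                simp [hm]
              rw [e1]
              have e2 : ∑ m ∈ range N, ∑ n ∈ range N, ‖y‖^2 * ((1/2:ℝ)^m * (1/2)^n)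
                  = ‖y‖^2 * ((∑ m ∈ range N, (1/2:ℝ)^m) * (∑ n ∈ range N, (1/2:ℝ)^n)) := by
                rw [Finset.sum_mul_sum]
                rw [Finset.mul_sum]
                refine Finset.sum_congr rfl fun m _ => ?_
                rw [Finset.mul_sum]
              rw [e2]
              have hg := sum_geometric_two_le N
              have hg0 : (0:ℝ) ≤ ∑ i ∈ range N, (1/2:ℝ)^i :=
                Finset.sum_nonneg fun i _ => by positivity
              have hgg : (∑ m ∈ range N, (1/2:ℝ)^m) * (∑ n ∈ range N, (1/2:ℝ)^n) ≤ 4 := by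
                nlinarith
              nlinarith [mul_le_mul_of_nonneg_left hgg (sq_nonneg ‖y‖)]
      calc ‖w‖^2 = ‖(inner ℂ w w : ℂ)‖ := h1
        _ ≤ _ := h3
        _ ≤ _ := h4
    -- combine
    have hsq : S^2 ≤ ‖y‖^2 * (S + 4 * ‖y‖^2) := by
      have h5 : S * S ≤ (‖y‖ * ‖w‖) * (‖y‖ * ‖w‖) :=
        mul_self_le_mul_self hS0 hSyw
      calc S^2 = S * S := sq S
        _ ≤ (‖y‖ * ‖w‖) * (‖y‖ * ‖w‖) := h5
        _ = ‖y‖^2 * ‖w‖^2 := by ring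
        _ ≤ ‖y‖^2 * (S + 4 * ‖y‖^2) := by nlinarith [sq_nonneg ‖y‖]
    nlinarith [sq_nonneg (S - 3 * ‖y‖^2), sq_nonneg ‖y‖, sq_nonneg (‖y‖^2), hS0]
  have hsum : Summable (fun n => ‖c n‖^2) :=
    summable_of_sum_range_le (fun n => sq_nonneg _) claim
  have h0 : Tendsto (fun n => ‖c n‖^2) atTop (𝓝 0) := hsum.tendsto_atTop_zero
  have h1 : Tendsto (fun n => ‖c n‖) atTop (𝓝 0) := by
    have h := (Real.continuous_sqrt.tendsto 0).comp h0
    simp only [Real.sqrt_zero] at h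
    exact Filter.Tendsto.congr (fun n => Real.sqrt_sq (norm_nonneg _)) h
  exact tendsto_zero_iff_norm_tendsto_zero.2 h1


/-- The pencil essential numerical range `w_e(A,B)` is closed. -/
theorem stmt_8 (A B : H →ₗ[ℂ] H) (dA dB : Submodule ℂ H) (hAB : dA ≤ dB) :
    IsClosed (pencilwe A B dA) := by
  refine isClosed_of_closure_subset ?_
  intro lam hlam
  have hmu : ∀ n : ℕ, ∃ mu ∈ pencilwe A B dA, ‖mu - lam‖ < 1/(n+1) := by
    intro n
    have hpos : (0:ℝ) < 1/(n+1) := by positivity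
    rcases Metric.mem_closure_iff.1 hlam _ hpos with ⟨mu, hmuS, hd⟩
    refine ⟨mu, hmuS, ?_⟩
    rwa [dist_comm, Complex.dist_eq] at hd
  choose mu hmuS hmucl using hmu
  set P : ℕ × H → Prop := fun p => p.2 ∈ dA ∧ ‖p.2‖ = 1 ∧ (inner ℂ (B p.2) p.2 : ℂ) ≠ 0 ∧
    ‖(inner ℂ (A p.2) p.2 : ℂ) / (inner ℂ (B p.2) p.2 : ℂ) - lam‖ < 2/(p.1+1) with hP
  set r : ℕ × H → ℕ × H → Prop := fun p p' =>
    p.1 < p'.1 ∧ ‖(inner ℂ p.2 p'.2 : ℂ)‖ ≤ (1/4:ℝ)^(p'.1) with hr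
  have hmain : ∀ s : Finset (ℕ × H), (∀ x ∈ s, P x) → ∃ y, P y ∧ ∀ x ∈ s, r x y := by
    intro s _
    set n := (s.sup fun p => p.1) + 1 with hn
    obtain ⟨x, hxdom, hxnorm, hxweak, hxB, hxlim⟩ := hmuS n
    have hpos1 : (0:ℝ) < 1/(n+1) := by positivity
    have E1 : ∀ᶠ m in atTop,
        ‖(inner ℂ (A (x m)) (x m) : ℂ) / (inner ℂ (B (x m)) (x m) : ℂ) - mu n‖ < 1/(n+1) := by
      have h' := hxlim (Metric.ball_mem_nhds (mu n) hpos1)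
      filter_upwards [h'] with m hm
      simp only [Set.mem_preimage, Metric.mem_ball, Complex.dist_eq] at hm
      exact hm
    have E2 : ∀ᶠ m in atTop, ∀ p ∈ s, ‖(inner ℂ p.2 (x m) : ℂ)‖ ≤ (1/4:ℝ)^n := by
      rw [Filter.eventually_all_finset]
      intro p _
      have hpos2 : (0:ℝ) < (1/4:ℝ)^n := by positivity
      have h' := hxweak p.2 (Metric.ball_mem_nhds 0 hpos2)
      filter_upwards [h'] with m hm
      simp only [Set.mem_preimage, Metric.mem_ball, dist_zero_right] at hm
      exact hm.le
    obtain ⟨m, hm1, hm2⟩ := (E1.and E2).exists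
    refine ⟨(n, x m), ⟨hxdom m, hxnorm m, hxB m, ?_⟩, fun p hp => ⟨?_, hm2 p hp⟩⟩
    · have htri : ‖(inner ℂ (A (x m)) (x m) : ℂ) / (inner ℂ (B (x m)) (x m) : ℂ) - lam‖ ≤
          ‖(inner ℂ (A (x m)) (x m) : ℂ) / (inner ℂ (B (x m)) (x m) : ℂ) - mu n‖ + ‖mu n - lam‖ :=
        norm_sub_le_norm_sub_add_norm_sub _ _ _
      have h2 := hmucl n
      have : (2:ℝ)/(n+1) = 1/(n+1) + 1/(n+1) := by ring
      simp only [hP]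
      rw [this]
      calc ‖(inner ℂ (A (x m)) (x m) : ℂ) / (inner ℂ (B (x m)) (x m) : ℂ) - lam‖
          ≤ _ + _ := htri
        _ < 1/(n+1) + 1/(n+1) := add_lt_add hm1 h2
    · exact lt_of_le_of_lt (Finset.le_sup (f := fun p => p.1) hp) (Nat.lt_succ_self _)
  obtain ⟨f, hfP, hfr⟩ := exists_seq_of_forall_finset_exists P r hmain
  have hg : StrictMono (fun n => (f n).1) := fun a b hab => (hfr a b hab).1
  have hgn : ∀ n : ℕ, n ≤ (f n).1 := fun n => hg.le_apply
  refine ⟨fun n => (f n).2, fun n => (hfP n).1, fun n => (hfP n).2.1, ?_,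
    fun n => (hfP n).2.2.1, ?_⟩
  · intro y
    refine almost_orth_weak_null _ (fun n => (hfP n).2.1) ?_ y
    intro k n hkn
    refine ((hfr k n hkn).2).trans ?_
    exact pow_le_pow_of_le_one (by norm_num) (by norm_num) (hgn n)
  · rw [tendsto_iff_norm_sub_tendsto_zero]
    have hb : Tendsto (fun n : ℕ => 2 * (1/(n+1) : ℝ)) atTop (𝓝 0) := by
      have := tendsto_one_div_add_atTop_nhds_zero_nat.const_mul (2:ℝ)
      simpa using this
    refine squeeze_zero (fun n => norm_nonneg _) ?_ hb
    intro n
    have h1 := (hfP n).2.2.2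
    have h2 : (2:ℝ)/((f n).1+1) ≤ 2 * (1/(n+1)) := by
      rw [mul_one_div]
      have : (n:ℝ) + 1 ≤ ((f n).1 : ℝ) + 1 := by
        have := hgn n
        push_cast
        linarith [(Nat.cast_le (α := ℝ)).2 this]
      apply div_le_div_of_nonneg_left (by norm_num) (by positivity) this
    exact (le_of_lt h1).trans h2
end

section
/- Let A, B be linear operators in a Hilbert space with dom(A) ⊆ dom(B). Assume W_e(A) = ∅ and B is A-form bounded with relative form bound β, i.e., for every β' > β there exists α' ≥ 0 with |⟨Bx,x⟩| ≤ α'‖x‖² + β'|⟨Ax,x⟩| for all x ∈ dom(A). Then w_e(A,B) ⊆ { λ ∈ ℂ : |λ| ≥ 1/β }; in particular, if β = 0 then w_e(A,B) = ∅. -/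
open Filter Topology

variable {H : Type*} [NormedAddCommGroup H] [InnerProductSpace ℂ H] [CompleteSpace H]

/-!
If `W_e(A) = ∅`, then `|⟨Axₙ,xₙ⟩| → ∞` along every normalized weakly null sequence in `dom A`:
otherwise, by Bolzano–Weierstrass, a subsequence of `⟨Axₙ,xₙ⟩` converges and its limit lies in
`W_e(A)`. Dividing the form bound by `|⟨Axₙ,xₙ⟩|` then gives
`|⟨Bxₙ,xₙ⟩| / |⟨Axₙ,xₙ⟩| ≤ α'/|⟨Axₙ,xₙ⟩| + β' → β'`, so a limit `λ` of the quotients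
`⟨Axₙ,xₙ⟩/⟨Bxₙ,xₙ⟩` satisfies `1 ≤ β' |λ|` for every `β' > β`, hence `1 ≤ β |λ|`.
-/

lemma one_le_mul_of_tendsto_div {a b : ℕ → ℝ} {α β L : ℝ} (ha : Tendsto a atTop atTop)
    (hb : ∀ n, 0 < b n) (hab : ∀ n, b n ≤ α + β * a n)
    (hL : Tendsto (fun n => a n / b n) atTop (𝓝 L)) : 1 ≤ β * L := by
  have hlim : Tendsto (fun n => a n / b n * (α * (a n)⁻¹ + β)) atTop (𝓝 (L * (α * 0 + β))) :=
    hL.mul ((tendsto_inv_atTop_zero.comp ha).const_mul α |>.add_const β)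
  refine ge_of_tendsto (by simpa [mul_comm] using hlim) ?_
  filter_upwards [ha.eventually_gt_atTop 0] with n han
  calc (1 : ℝ) ≤ (α + β * a n) / b n := (one_le_div (hb n)).2 (hab n)
    _ = a n / b n * (α * (a n)⁻¹ + β) := by field_simp

omit [CompleteSpace H] in
lemma tendsto_norm_inner_atTop_of_essNumRange_eq_empty {T : H →ₗ[ℂ] H} {d : Submodule ℂ H}
    (hT : essNumRange T d = ∅) {x : ℕ → H} (hxd : ∀ n, x n ∈ d) (hx1 : ∀ n, ‖x n‖ = 1)
    (hx0 : ∀ y : H, Tendsto (fun n => (inner ℂ y (x n) : ℂ)) atTop (𝓝 0)) :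
    Tendsto (fun n => ‖(inner ℂ (T (x n)) (x n) : ℂ)‖) atTop atTop := by
  refine tendsto_atTop.2 fun r => ?_
  by_contra hr
  obtain ⟨z, -, φ, hφ, hz⟩ := tendsto_subseq_of_frequently_bounded
    (Metric.isBounded_closedBall (x := (0 : ℂ)) (r := r))
    ((not_eventually.1 hr).mono fun n hn => by simpa using (not_le.1 hn).le)
  exact (Set.eq_empty_iff_forall_notMem.1 hT) z
    ⟨x ∘ φ, fun n => hxd _, fun n => hx1 _, fun y => (hx0 y).comp hφ.tendsto_atTop, hz⟩

omit [CompleteSpace H] in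
lemma one_le_mul_norm_of_mem_pencilwe {A B : H →ₗ[ℂ] H} {dA : Submodule ℂ H}
    (hA : essNumRange A dA = ∅) {α β : ℝ}
    (hform : ∀ x ∈ dA, ‖(inner ℂ (B x) x : ℂ)‖ ≤ α * ‖x‖ ^ 2 + β * ‖(inner ℂ (A x) x : ℂ)‖)
    {lam : ℂ} (hlam : lam ∈ pencilwe A B dA) : 1 ≤ β * ‖lam‖ := by
  obtain ⟨x, hxd, hx1, hx0, hB, hlim⟩ := hlam
  refine one_le_mul_of_tendsto_div
    (tendsto_norm_inner_atTop_of_essNumRange_eq_empty hA hxd hx1 hx0)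
    (fun n => norm_pos_iff.2 (hB n)) (fun n => by simpa [hx1 n] using hform _ (hxd n)) ?_
  simpa only [norm_div] using hlim.norm

theorem stmt_11_general (A B : H →ₗ[ℂ] H) (dA : Submodule ℂ H)
    (hWeA : essNumRange A dA = ∅) (β : ℝ)
    (hform : ∀ β' > β, ∃ α' ≥ (0 : ℝ), ∀ x ∈ dA,
      ‖(inner ℂ (B x) x : ℂ)‖ ≤ α' * ‖x‖ ^ 2 + β' * ‖(inner ℂ (A x) x : ℂ)‖) :
    pencilwe A B dA ⊆ {lam : ℂ | 1 ≤ β * ‖lam‖} ∧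
      (β = 0 → pencilwe A B dA = ∅) := by
  have hsub : pencilwe A B dA ⊆ {lam : ℂ | 1 ≤ β * ‖lam‖} := fun lam hlam => by
    have hgt : ∀ᶠ β' in 𝓝[>] β, 1 ≤ β' * ‖lam‖ :=
      eventually_nhdsWithin_of_forall fun β' hβ' => by
        obtain ⟨α', -, hα'⟩ := hform β' hβ'
        exact one_le_mul_norm_of_mem_pencilwe hWeA hα' hlam
    exact ge_of_tendsto
      (((continuous_mul_const ‖lam‖).tendsto β).mono_left nhdsWithin_le_nhds) hgt
  refine ⟨hsub, fun hβ => Set.eq_empty_of_forall_notMem fun lam hlam => ?_⟩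
  exact absurd (hsub hlam) (by simp [hβ])

/-- If `W_e(A) = ∅` and `B` is `A`-form bounded with relative form bound `β`, then
`w_e(A,B) ⊆ {λ : |λ| ≥ 1/β}` (the empty set when `β = 0`). -/
theorem stmt_11 (A B : H →ₗ[ℂ] H) (dA dB : Submodule ℂ H) (hAB : dA ≤ dB)
    (hWeA : essNumRange A dA = ∅) (β : ℝ) (hβ : 0 ≤ β)
    (hform : ∀ β' > β, ∃ α' ≥ (0 : ℝ), ∀ x ∈ dA,
      ‖(inner ℂ (B x) x : ℂ)‖ ≤ α' * ‖x‖ ^ 2 + β' * ‖(inner ℂ (A x) x : ℂ)‖) :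
    pencilwe A B dA ⊆ {lam : ℂ | 1 ≤ β * ‖lam‖} ∧
      (β = 0 → pencilwe A B dA = ∅) :=
  stmt_11_general A B dA hWeA β hform
end

section
/- For every compact operator K ∈ L(H) and linear operators A, B in H with dom(A) ⊆ dom(B), W_e(A + K, B) = W_e(A, B). -/
open Filter Topology

variable {H : Type*} [NormedAddCommGroup H] [InnerProductSpace ℂ H] [CompleteSpace H]

/-!
A compact operator maps bounded weakly null sequences to norm null ones: the image of such a
sequence lies in a compact set, and any cluster point `y` there satisfies `⟪y, y⟫ = 0` because
the image is still weakly null. Hence `⟪K xₙ, xₙ⟫ → 0` along every sequence defining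
`W_e(T)`, so `W_e(T + K) = W_e(T)`; apply this to `T = A - λB`.
-/

section CompactOperator

variable {𝕜 E F : Type*} [RCLike 𝕜]
  [NormedAddCommGroup E] [InnerProductSpace 𝕜 E] [CompleteSpace E]
  [NormedAddCommGroup F] [InnerProductSpace 𝕜 F] [CompleteSpace F]

theorem IsCompactOperator.tendsto_zero_of_weakly_null {K : E →L[𝕜] F} (hK : IsCompactOperator K)
    {x : ℕ → E} (hbdd : Bornology.IsBounded (Set.range x))
    (hweak : ∀ y : E, Tendsto (fun n => (inner 𝕜 y (x n) : 𝕜)) atTop (𝓝 0)) :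
    Tendsto (fun n => K (x n)) atTop (𝓝 0) := by
  refine (hK.isCompact_closure_image_of_bounded hbdd).tendsto_nhds_of_unique_mapClusterPt
    (Eventually.of_forall fun n => subset_closure ⟨x n, Set.mem_range_self n, rfl⟩)
    fun y _ hy => ?_
  have hKweak : Tendsto (fun n => (inner 𝕜 y (K (x n)) : 𝕜)) atTop (𝓝 0) := by
    simpa only [← ContinuousLinearMap.adjoint_inner_left] using hweak (K.adjoint y)
  have hcluster : MapClusterPt (inner 𝕜 y y : 𝕜) atTop (fun n => (inner 𝕜 y (K (x n)) : 𝕜)) :=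
    hy.tendsto_comp (tendsto_const_nhds.inner tendsto_id)
  exact inner_self_eq_zero.mp (eq_of_nhds_neBot (hcluster.clusterPt.mono hKweak))

theorem IsCompactOperator.tendsto_inner_self_zero_of_weakly_null {K : E →L[𝕜] E}
    (hK : IsCompactOperator K) {x : ℕ → E} (hbdd : Bornology.IsBounded (Set.range x))
    (hweak : ∀ y : E, Tendsto (fun n => (inner 𝕜 y (x n) : 𝕜)) atTop (𝓝 0)) :
    Tendsto (fun n => (inner 𝕜 (K (x n)) (x n) : 𝕜)) atTop (𝓝 0) := by
  obtain ⟨C, hC⟩ := isBounded_iff_forall_norm_le.mp hbdd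
  have hKx : Tendsto (fun n => ‖K (x n)‖ * C) atTop (𝓝 0) := by
    simpa using (hK.tendsto_zero_of_weakly_null hbdd hweak).norm.mul_const C
  refine squeeze_zero_norm (fun n => ?_) hKx
  calc ‖(inner 𝕜 (K (x n)) (x n) : 𝕜)‖ ≤ ‖K (x n)‖ * ‖x n‖ := norm_inner_le_norm _ _
    _ ≤ ‖K (x n)‖ * C := by gcongr; exact hC _ (Set.mem_range_self n)

end CompactOperator

theorem essNumRange_add_compact (T : H →ₗ[ℂ] H) (d : Submodule ℂ H) {K : H →L[ℂ] H}
    (hK : IsCompactOperator K) : essNumRange (T + (K : H →ₗ[ℂ] H)) d = essNumRange T d := by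
  ext z
  refine exists_congr fun x => and_congr_right fun _ => and_congr_right fun hnorm =>
    and_congr_right fun hweak => ?_
  have hbdd : Bornology.IsBounded (Set.range x) :=
    isBounded_iff_forall_norm_le.mpr ⟨1, by rintro _ ⟨n, rfl⟩; exact (hnorm n).le⟩
  have hKx := hK.tendsto_inner_self_zero_of_weakly_null hbdd hweak
  simp only [LinearMap.add_apply, ContinuousLinearMap.coe_coe, inner_add_left]
  exact ⟨fun h => by simpa using h.sub hKx, fun h => by simpa using h.add hKx⟩

theorem stmt_13_general (A B : H →ₗ[ℂ] H) (dA : Submodule ℂ H)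
    (K : H →L[ℂ] H) (hK : IsCompactOperator K) :
    pencilWe (A + (K : H →ₗ[ℂ] H)) B dA = pencilWe A B dA := by
  unfold pencilWe
  simp_rw [add_sub_right_comm, essNumRange_add_compact _ _ hK]

/-- `W_e(A + K, B) = W_e(A, B)` for every compact `K ∈ L(H)`. -/
theorem stmt_13 (A B : H →ₗ[ℂ] H) (dA dB : Submodule ℂ H) (hAB : dA ≤ dB)
    (K : H →L[ℂ] H) (hK : IsCompactOperator K) :
    pencilWe (A + (K : H →ₗ[ℂ] H)) B dA = pencilWe A B dA :=
  stmt_13_general A B dA K hK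
end

section
/- Let T be a closed operator in a Hilbert space H. Then the approximate point spectrum satisfies σ_app(T) ⊆ ⋂_{B ∈ L(H)} W(BT, B), where W(BT,B) := { λ : 0 ∈ closure(W(BT − λB)) }. -/
open Filter Topology

variable {H : Type*} [NormedAddCommGroup H] [InnerProductSpace ℂ H] [CompleteSpace H]

theorem norm_inner_comp_sub_smul_le {𝕜 E : Type*} [RCLike 𝕜] [NormedAddCommGroup E]
    [InnerProductSpace 𝕜 E] (T : E →ₗ[𝕜] E) (B : E →L[𝕜] E) (lam : 𝕜) (x : E) :
    ‖(inner 𝕜 (((B : E →ₗ[𝕜] E) ∘ₗ T - lam • (B : E →ₗ[𝕜] E)) x) x : 𝕜)‖ ≤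
      ‖B‖ * ‖T x - lam • x‖ * ‖x‖ := by
  have hfactor : ((B : E →ₗ[𝕜] E) ∘ₗ T - lam • (B : E →ₗ[𝕜] E)) x = B (T x - lam • x) := by
    simp [map_sub, map_smul]
  rw [hfactor]
  exact (norm_inner_le_norm _ _).trans (mul_le_mul_of_nonneg_right (B.le_opNorm _) (norm_nonneg x))

theorem mem_pencilW_comp_of_approx_eigenvalue {E : Type*} [NormedAddCommGroup E]
    [InnerProductSpace ℂ E] (T : E →ₗ[ℂ] E) (dT : Submodule ℂ E)
    (B : E →L[ℂ] E) {lam : ℂ} {x : ℕ → E} (hxd : ∀ n, x n ∈ dT) (hxn : ∀ n, ‖x n‖ = 1)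
    (hT : Tendsto (fun n => ‖T (x n) - lam • x n‖) atTop (𝓝 0)) :
    lam ∈ pencilW ((B : E →ₗ[ℂ] E) ∘ₗ T) (B : E →ₗ[ℂ] E) dT := by
  have hbound : ∀ n, ‖(inner ℂ (((B : E →ₗ[ℂ] E) ∘ₗ T - lam • (B : E →ₗ[ℂ] E)) (x n))
      (x n) : ℂ)‖ ≤ ‖B‖ * ‖T (x n) - lam • x n‖ := fun n => by
    simpa only [hxn n, mul_one] using norm_inner_comp_sub_smul_le T B lam (x n)
  have hlim : Tendsto (fun n => (inner ℂ (((B : E →ₗ[ℂ] E) ∘ₗ T - lam • (B : E →ₗ[ℂ] E))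
      (x n)) (x n) : ℂ)) atTop (𝓝 0) := by
    rw [tendsto_zero_iff_norm_tendsto_zero]
    exact squeeze_zero (fun n => norm_nonneg _) hbound (by simpa using hT.const_mul ‖B‖)
  exact mem_closure_of_tendsto hlim (Eventually.of_forall fun n => ⟨x n, hxd n, hxn n, rfl⟩)

theorem stmt_16_general (T : H →ₗ[ℂ] H) (dT : Submodule ℂ H) :
    {lam : ℂ | ∃ x : ℕ → H, (∀ n, x n ∈ dT) ∧ (∀ n, ‖x n‖ = 1) ∧
        Tendsto (fun n => ‖T (x n) - lam • x n‖) atTop (𝓝 0)} ⊆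
      ⋂ B : H →L[ℂ] H, pencilW ((B : H →ₗ[ℂ] H) ∘ₗ T) (B : H →ₗ[ℂ] H) dT := by
  rintro lam ⟨x, hxd, hxn, hT⟩
  exact Set.mem_iInter.2 fun B => mem_pencilW_comp_of_approx_eigenvalue T dT B hxd hxn hT

/-- `σ_app(T) ⊆ ⋂_{B ∈ L(H)} W(BT, B)` for a closed densely defined operator `T`. -/
theorem stmt_16 (T : H →ₗ[ℂ] H) (dT : Submodule ℂ H)
    (hclosed : IsClosed {p : H × H | p.1 ∈ dT ∧ p.2 = T p.1})
    (hdense : Dense (dT : Set H)) :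
    {lam : ℂ | ∃ x : ℕ → H, (∀ n, x n ∈ dT) ∧ (∀ n, ‖x n‖ = 1) ∧
        Tendsto (fun n => ‖T (x n) - lam • x n‖) atTop (𝓝 0)} ⊆
      ⋂ B : H →L[ℂ] H, pencilW ((B : H →ₗ[ℂ] H) ∘ₗ T) (B : H →ₗ[ℂ] H) dT :=
  stmt_16_general T dT
end

section
/- Let T be a closed operator in a Hilbert space H. Then ⋂_{B ∈ L(H), 0 ∈ ρ(B)} W(BT, B) ⊆ σ(T): if λ ∈ W(BT,B) for every boundedly invertible B ∈ L(H), then λ ∈ σ(T). (The proof uses the polar decomposition T − λ = U|T − λ| and B = U*.) -/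
open Filter Topology

variable {H : Type*} [NormedAddCommGroup H] [InnerProductSpace ℂ H] [CompleteSpace H]

section Aux

variable {H : Type*} [NormedAddCommGroup H] [InnerProductSpace ℂ H] [CompleteSpace H]

/-- A bounded-below operator with dense range is a unit. -/
lemma aux_isUnit (f : H →L[ℂ] H) (hb : ∀ y, ‖y‖ ≤ ‖f y‖)
    (hd : Dense (Set.range f)) : IsUnit f := by
  have hanti : AntilipschitzWith 1 f :=
    ContinuousLinearMap.antilipschitz_of_bound f (by simpa using hb)
  have hcl : IsClosed (Set.range f) := hanti.isClosed_range f.uniformContinuous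
  have hinj : Function.Injective f := hanti.injective
  have hsurj : Function.Surjective f := by
    rw [← Set.range_eq_univ, ← hcl.closure_eq]
    exact hd.closure_eq
  let e := ContinuousLinearEquiv.ofBijective f
    (LinearMap.ker_eq_bot.mpr hinj) (LinearMap.range_eq_top.mpr hsurj)
  have he : ∀ x, e x = f x := fun x => rfl
  refine ⟨⟨f, (e.symm : H →L[ℂ] H), ?_, ?_⟩, rfl⟩
  · ext x
    simp only [ContinuousLinearMap.mul_apply, ContinuousLinearMap.one_apply,
      ContinuousLinearEquiv.coe_coe]
    rw [← he]
    exact e.apply_symm_apply x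
  · ext x
    simp only [ContinuousLinearMap.mul_apply, ContinuousLinearMap.one_apply,
      ContinuousLinearEquiv.coe_coe]
    rw [← he]
    exact e.symm_apply_apply x

lemma aux_dense (g : H →L[ℂ] H)
    (hg : ∀ v : H, (∀ y, (inner ℂ (g y) v : ℂ) = 0) → v = 0) :
    Dense (Set.range g) := by
  have h1 : (LinearMap.range (g : H →ₗ[ℂ] H))ᗮ = ⊥ := by
    rw [Submodule.eq_bot_iff]
    intro v hv
    exact hg v fun y => hv (g y) ⟨y, rfl⟩
  have h2 := Submodule.topologicalClosure_eq_top_iff.mpr h1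
  have h3 := congrArg (fun K : Submodule ℂ H => (K : Set H)) h2
  simp only [Submodule.topologicalClosure_coe, Submodule.top_coe] at h3
  have h4 : (LinearMap.range (g : H →ₗ[ℂ] H) : Set H) = Set.range g := by
    ext x; simp [LinearMap.mem_range]
  rw [dense_iff_closure_eq, ← h4, h3]

end Aux

set_option maxHeartbeats 1000000 in
/-- If `λ ∈ W(BT,B)` for every boundedly invertible `B ∈ L(H)`, then `λ ∈ σ(T)`, i.e. `T - λ`
has no bounded everywhere-defined inverse. -/
theorem stmt_17 (T : H →ₗ[ℂ] H) (dT : Submodule ℂ H)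
    (hclosed : IsClosed {p : H × H | p.1 ∈ dT ∧ p.2 = T p.1})
    (hdense : Dense (dT : Set H))
    (lam : ℂ)
    (h : ∀ B : H →L[ℂ] H, IsUnit B →
      lam ∈ pencilW ((B : H →ₗ[ℂ] H) ∘ₗ T) (B : H →ₗ[ℂ] H) dT) :
    ¬ ∃ R : H →L[ℂ] H, (∀ y, R y ∈ dT) ∧ (∀ y, T (R y) - lam • R y = y) ∧
      (∀ x ∈ dT, R (T x - lam • x) = x) := by
  rintro ⟨R, hRdom, hRright, hRleft⟩
  classical
  -- the square root of R* R
  set S : H →L[ℂ] H := CFC.sqrt (star R * R) with hSdef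
  have hS0 : (0 : H →L[ℂ] H) ≤ S := CFC.sqrt_nonneg _
  have hSsq : S * S = star R * R := by
    have h2 := CFC.sq_sqrt (star R * R) (star_mul_self_nonneg R)
    rwa [pow_two] at h2
  have hSpos : S.IsPositive := (ContinuousLinearMap.nonneg_iff_isPositive S).mp hS0
  have hSsa : IsSelfAdjoint S := hSpos.isSelfAdjoint
  have hadj : ContinuousLinearMap.adjoint S = S := hSsa.adjoint_eq
  have hinner : ∀ y : H, (inner ℂ (S y) (S y) : ℂ) = inner ℂ (R y) (R y) := by
    intro y
    have h1 : (inner ℂ (S y) (S y) : ℂ) = inner ℂ y (S (S y)) := by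
      simpa using hSsa.isSymmetric y (S y)
    have h2 : S (S y) = ContinuousLinearMap.adjoint R (R y) := by
      have := congrArg (fun A : H →L[ℂ] H => A y) hSsq
      simpa [ContinuousLinearMap.mul_apply, ContinuousLinearMap.star_eq_adjoint] using this
    rw [h1, h2, ContinuousLinearMap.adjoint_inner_right]
  have hnorm : ∀ y : H, ‖S y‖ = ‖R y‖ := by
    intro y
    have h2 : ‖S y‖ ^ 2 = ‖R y‖ ^ 2 := by
      have h1 := hinner y
      rw [inner_self_eq_norm_sq_to_K, inner_self_eq_norm_sq_to_K] at h1
      exact_mod_cast h1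
    rw [← Real.sqrt_sq (norm_nonneg (S y)), ← Real.sqrt_sq (norm_nonneg (R y)), h2]
  have hRinj : ∀ y : H, R y = 0 → y = 0 := by
    intro y hy
    have := hRright y
    rw [hy] at this
    simpa using this.symm
  have hSinj : Function.Injective S := by
    intro a b hab
    have h1 : S (a - b) = 0 := by rw [map_sub, hab, sub_self]
    have h2 : R (a - b) = 0 := by
      rw [← norm_eq_zero, ← hnorm, h1, norm_zero]
    have := hRinj _ h2
    exact sub_eq_zero.mp this
  -- S has dense range
  have hSdense : Dense (Set.range S) := by
    apply aux_dense
    intro v hv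
    have h1 : S v = 0 := by
      have h2 : (inner ℂ (S (S v)) v : ℂ) = 0 := hv (S v)
      have h3 : (inner ℂ (S v) (S v) : ℂ) = 0 := by
        rw [← h2]
        simpa using (hSsa.isSymmetric (S v) v).symm
      simpa using h3
    have h4 : R v = 0 := by rw [← norm_eq_zero, ← hnorm, h1, norm_zero]
    exact hRinj v h4
  -- the submodule range of S
  set Sl : H →ₗ[ℂ] H := (S : H →ₗ[ℂ] H) with hSl
  set M : Submodule ℂ H := LinearMap.range Sl with hM
  have hMcoe : (M : Set H) = Set.range S := by
    ext u; simp [hM, LinearMap.mem_range, hSl]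
  have hMdense : Dense (M : Set H) := by rw [hMcoe]; exact hSdense
  -- linear isometry from M to H sending S y to R y
  have hSlinj : Function.Injective Sl := hSinj
  set Se : H ≃ₗ[ℂ] M := LinearEquiv.ofInjective Sl hSlinj with hSe
  have hSecoe : ∀ y : H, ((Se y : M) : H) = S y := fun y => rfl
  set f₀ : M →ₗ[ℂ] H := (R : H →ₗ[ℂ] H) ∘ₗ (Se.symm : M →ₗ[ℂ] H) with hf₀
  have hf₀norm : ∀ u : M, ‖f₀ u‖ = ‖u‖ := by
    intro u
    have h1 : ((u : H)) = S (Se.symm u) := by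
      have := hSecoe (Se.symm u)
      rwa [Se.apply_symm_apply] at this
    have h2 : f₀ u = R (Se.symm u) := rfl
    rw [h2, ← hnorm]
    rw [show ‖u‖ = ‖(u : H)‖ from rfl, h1]
  set fI : M →ₗᵢ[ℂ] H := ⟨f₀, hf₀norm⟩ with hfI
  set f : M →L[ℂ] H := fI.toContinuousLinearMap with hf
  set e : M →L[ℂ] H := M.subtypeL with he
  have heapp : ∀ u : M, e u = (u : H) := fun u => rfl
  have h_dense : DenseRange e := by
    have : Set.range e = (M : Set H) := Subtype.range_coe
    rw [DenseRange, this]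
    exact hMdense
  have h_e : IsUniformInducing e := by
    have : Isometry e := fun a b => rfl
    exact this.isUniformInducing
  set V : H →L[ℂ] H := f.extend e with hVdef
  have hV : ∀ y : H, V (S y) = R y := by
    intro y
    have h1 : e (Se y) = S y := rfl
    have h2 : V (e (Se y)) = f (Se y) := ContinuousLinearMap.extend_eq f h_dense h_e (Se y)
    have h3 : f (Se y) = R y := by
      show f₀ (Se y) = R y
      rw [hf₀]
      simp only [LinearMap.comp_apply, LinearEquiv.coe_coe, ContinuousLinearMap.coe_coe,
        Se.symm_apply_apply]
    rw [← h1, h2, h3]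
  -- V is an isometry
  have hVnorm : ∀ u : H, ‖V u‖ = ‖u‖ := by
    have hC : IsClosed {u : H | ‖V u‖ = ‖u‖} := isClosed_eq V.continuous.norm continuous_norm
    have hsub : (M : Set H) ⊆ {u : H | ‖V u‖ = ‖u‖} := by
      rintro u hu
      rw [hMcoe] at hu
      obtain ⟨y, rfl⟩ := hu
      show ‖V (S y)‖ = ‖S y‖
      rw [hV y, hnorm]
    have h1 : closure (M : Set H) ⊆ {u : H | ‖V u‖ = ‖u‖} := closure_minimal hsub hC
    intro u
    exact h1 (by rw [hMdense.closure_eq]; trivial)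
  set VI : H →ₗᵢ[ℂ] H := ⟨(V : H →ₗ[ℂ] H), hVnorm⟩ with hVI
  have hVinner : ∀ a b : H, (inner ℂ (V a) (V b) : ℂ) = inner ℂ a b := fun a b =>
    VI.inner_map_map a b
  -- V is a unit
  have hVunit : IsUnit V := by
    apply aux_isUnit V (fun y => le_of_eq (hVnorm y).symm)
    have hsub : (dT : Set H) ⊆ Set.range V := by
      intro x hx
      refine ⟨S (T x - lam • x), ?_⟩
      rw [hV, hRleft x hx]
    exact hdense.mono hsub
  -- S + 1 is a unit
  have hS1 : ∀ y : H, (S + 1) y = S y + y := fun y => rfl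
  have hS1re : ∀ y : H, ((inner ℂ ((S + 1) y) y : ℂ)).re = (inner ℂ (S y) y : ℂ).re + ‖y‖ ^ 2 := by
    intro y
    rw [hS1, inner_add_left, Complex.add_re]
    congr 1
    simpa using inner_self_eq_norm_sq (𝕜 := ℂ) (x := y)
  have hSre : ∀ y : H, 0 ≤ ((inner ℂ (S y) y : ℂ)).re := by
    intro y
    have := hSpos.inner_nonneg_left y
    exact (Complex.nonneg_iff.mp this).1
  have hS1unit : IsUnit (S + 1) := by
    apply aux_isUnit
    · intro y
      have h1 : ‖y‖ ^ 2 ≤ ((inner ℂ ((S + 1) y) y : ℂ)).re := by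
        rw [hS1re]
        linarith [hSre y]
      have h2 : ((inner ℂ ((S + 1) y) y : ℂ)).re ≤ ‖(S + 1) y‖ * ‖y‖ := by
        calc ((inner ℂ ((S + 1) y) y : ℂ)).re ≤ ‖(inner ℂ ((S + 1) y) y : ℂ)‖ :=
              Complex.re_le_norm _
          _ ≤ ‖(S + 1) y‖ * ‖y‖ := norm_inner_le_norm _ _
      rcases eq_or_lt_of_le (norm_nonneg y) with h3 | h3
      · rw [← h3]; positivity
      · nlinarith
    · apply aux_dense
      intro v hv
      have h1 := hv v
      have h2 : ((inner ℂ ((S + 1) v) v : ℂ)).re = 0 := by rw [h1]; simp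
      rw [hS1re] at h2
      have h3 := hSre v
      have h4 : ‖v‖ ^ 2 ≤ 0 := by linarith
      have h5 : ‖v‖ = 0 := by nlinarith [norm_nonneg v]
      exact norm_eq_zero.mp h5
  -- the invertible operator B
  have hBunit : IsUnit (V * (S + 1)) := hVunit.mul hS1unit
  -- derive the contradiction
  have hmem := h (V * (S + 1)) hBunit
  rw [pencilW, Set.mem_setOf_eq] at hmem
  have hsub : numRange ((((V * (S + 1)) : H →L[ℂ] H) : H →ₗ[ℂ] H) ∘ₗ T
      - lam • (((V * (S + 1)) : H →L[ℂ] H) : H →ₗ[ℂ] H)) dT ⊆ {z : ℂ | 1 ≤ z.re} := by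
    rintro z ⟨x, hx, hx1, rfl⟩
    set y : H := T x - lam • x with hy
    have hxy : R y = x := hRleft x hx
    have happ : ((((V * (S + 1)) : H →L[ℂ] H) : H →ₗ[ℂ] H) ∘ₗ T
        - lam • (((V * (S + 1)) : H →L[ℂ] H) : H →ₗ[ℂ] H)) x = V (S y + y) := by
      simp only [LinearMap.sub_apply, LinearMap.comp_apply, LinearMap.smul_apply,
        ContinuousLinearMap.coe_coe, ContinuousLinearMap.mul_apply, hS1,
        ← map_smul V, ← map_sub V]
      congr 1
      simp only [hy, map_sub, map_smul, smul_add]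
      abel
    have hxV : x = V (S y) := by rw [hV, hxy]
    have hz : (inner ℂ (V (S y + y)) x : ℂ) = inner ℂ (S y) (S y) + inner ℂ y (S y) := by
      conv_lhs => rw [hxV]
      rw [hVinner, inner_add_left]
    have h1 : (inner ℂ (S y) (S y) : ℂ).re = ‖S y‖ ^ 2 := by
      simpa using inner_self_eq_norm_sq (𝕜 := ℂ) (x := S y)
    have h2 : ‖S y‖ = 1 := by rw [hnorm, hxy, hx1]
    have h3 : 0 ≤ (inner ℂ y (S y) : ℂ).re := by
      exact (Complex.nonneg_iff.mp (hSpos.inner_nonneg_right y)).1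
    rw [Set.mem_setOf_eq, happ, hz, Complex.add_re, h1, h2]
    norm_num
    linarith
  have hcl2 : IsClosed {z : ℂ | 1 ≤ z.re} := isClosed_le continuous_const Complex.continuous_re
  have hfin := closure_minimal hsub hcl2 hmem
  simp only [Set.mem_setOf_eq, Complex.zero_re] at hfin
  linarith
end

section
/- Let T be a closed densely defined operator in a Hilbert space H. Then the essential spectrum σ_e(T) (defined via singular sequences) equals the intersection over all bounded operators B ∈ L(H) of the pencil essential numerical ranges W_e(BT, B). -/
open Filter Topology

variable {H : Type*} [NormedAddCommGroup H] [InnerProductSpace ℂ H] [CompleteSpace H]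

noncomputable section AuxBMT

variable (T : H →ₗ[ℂ] H) (dT : Submodule ℂ H) (lam : ℂ)

/-- The graph of `T - lam` restricted to `dT`, as a submodule of `WithLp 2 (H × H)`. -/
def graphSub : Submodule ℂ (WithLp 2 (H × H)) :=
  (Submodule.map (LinearMap.prod LinearMap.id (T - lam • LinearMap.id)) dT).comap
    (WithLp.linearEquiv 2 ℂ (H × H)).toLinearMap

lemma mem_graphSub {T : H →ₗ[ℂ] H} {dT : Submodule ℂ H} {lam : ℂ}
    {p : WithLp 2 (H × H)} :
    p ∈ graphSub T dT lam ↔ p.fst ∈ dT ∧ p.snd = T p.fst - lam • p.fst := by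
  constructor
  · rintro ⟨x, hx, h⟩
    have h1 : x = p.fst := congrArg Prod.fst h
    have h2 : T x - lam • x = p.snd := congrArg Prod.snd h
    subst h1
    exact ⟨hx, h2.symm⟩
  · rintro ⟨h1, h2⟩
    exact ⟨p.fst, h1, by
      show (p.fst, T p.fst - lam • p.fst) = WithLp.linearEquiv 2 ℂ (H × H) p
      rw [← h2]
      rfl⟩

lemma isClosed_graphSub (hclosed : IsClosed {p : H × H | p.1 ∈ dT ∧ p.2 = T p.1}) :
    IsClosed ((graphSub T dT lam : Submodule ℂ (WithLp 2 (H × H))) : Set (WithLp 2 (H × H))) := by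
  have h0 : IsClosed {p : H × H | p.1 ∈ dT ∧ p.2 = T p.1 - lam • p.1} := by
    have he : {p : H × H | p.1 ∈ dT ∧ p.2 = T p.1 - lam • p.1}
        = (fun p : H × H => (p.1, p.2 + lam • p.1)) ⁻¹' {p : H × H | p.1 ∈ dT ∧ p.2 = T p.1} := by
      ext p
      simp only [Set.mem_setOf_eq, Set.mem_preimage]
      constructor
      · rintro ⟨h1, h2⟩; exact ⟨h1, by rw [h2]; abel⟩
      · rintro ⟨h1, h2⟩; exact ⟨h1, by rw [← h2]; abel⟩
    rw [he]
    exact hclosed.preimage (continuous_fst.prodMk (continuous_snd.add (continuous_fst.const_smul lam)))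
  have he2 : ((graphSub T dT lam : Submodule ℂ (WithLp 2 (H × H))) : Set (WithLp 2 (H × H)))
      = (WithLp.prodContinuousLinearEquiv 2 ℂ H H) ⁻¹'
        {p : H × H | p.1 ∈ dT ∧ p.2 = T p.1 - lam • p.1} := by
    ext p
    simp only [SetLike.mem_coe, Set.mem_preimage, Set.mem_setOf_eq, mem_graphSub]
    exact Iff.rfl
  rw [he2]
  exact h0.preimage (WithLp.prodContinuousLinearEquiv 2 ℂ H H).continuous

variable (hG : IsClosed ((graphSub T dT lam : Submodule ℂ (WithLp 2 (H × H))) : Set (WithLp 2 (H × H))))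

/-- Embedding `y ↦ (y, 0)` into `WithLp 2 (H × H)`. -/
def inlE : H →L[ℂ] WithLp 2 (H × H) :=
  (WithLp.prodContinuousLinearEquiv 2 ℂ H H).symm.toContinuousLinearMap ∘L
    ContinuousLinearMap.inl ℂ H H

/-- The orthogonal projection onto the graph. -/
def Pmap : WithLp 2 (H × H) →L[ℂ] graphSub T dT lam :=
  haveI : CompleteSpace (graphSub T dT lam) := hG.completeSpace_coe
  (graphSub T dT lam).orthogonalProjection

/-- `R = (I + S*S)⁻¹` where `S = T - lam` on `dT`. -/
def Rop : H →L[ℂ] H :=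
  ContinuousLinearMap.fst ℂ H H ∘L
    (WithLp.prodContinuousLinearEquiv 2 ℂ H H).toContinuousLinearMap ∘L
    (graphSub T dT lam).subtypeL ∘L Pmap T dT lam hG ∘L inlE

/-- `C = S (I + S*S)⁻¹`. -/
def Cop : H →L[ℂ] H :=
  ContinuousLinearMap.snd ℂ H H ∘L
    (WithLp.prodContinuousLinearEquiv 2 ℂ H H).toContinuousLinearMap ∘L
    (graphSub T dT lam).subtypeL ∘L Pmap T dT lam hG ∘L inlE

lemma proj_fst (y : H) :
    ((Pmap T dT lam hG (inlE y) : WithLp 2 (H × H))).fst = Rop T dT lam hG y := rfl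

lemma proj_snd (y : H) :
    ((Pmap T dT lam hG (inlE y) : WithLp 2 (H × H))).snd = Cop T dT lam hG y := rfl

lemma Rop_mem (y : H) :
    Rop T dT lam hG y ∈ dT ∧
      Cop T dT lam hG y = T (Rop T dT lam hG y) - lam • Rop T dT lam hG y := by
  have h := (Pmap T dT lam hG (inlE y)).2
  rw [mem_graphSub] at h
  rwa [proj_fst, proj_snd] at h

lemma key_identity (y u : H) (hu : u ∈ dT) :
    (inner ℂ (y - Rop T dT lam hG y) u : ℂ)
      = inner ℂ (Cop T dT lam hG y) (T u - lam • u) := by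
  haveI : CompleteSpace (graphSub T dT lam) := hG.completeSpace_coe
  have hw : (WithLp.linearEquiv 2 ℂ (H × H)).symm (u, T u - lam • u) ∈ graphSub T dT lam :=
    mem_graphSub.2 ⟨hu, rfl⟩
  have h0 := Submodule.starProjection_inner_eq_zero (K := graphSub T dT lam) (inlE y)
    ((WithLp.linearEquiv 2 ℂ (H × H)).symm (u, T u - lam • u)) hw
  have h1 : (inner ℂ (inlE y - (Pmap T dT lam hG (inlE y) : WithLp 2 (H × H)))
      ((WithLp.linearEquiv 2 ℂ (H × H)).symm (u, T u - lam • u)) : ℂ) = 0 := h0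
  rw [WithLp.prod_inner_apply] at h1
  simp only [WithLp.ofLp_fst, WithLp.ofLp_snd] at h1
  have hf : (inlE y - (Pmap T dT lam hG (inlE y) : WithLp 2 (H × H))).fst
      = y - Rop T dT lam hG y := rfl
  have hs : (inlE y - (Pmap T dT lam hG (inlE y) : WithLp 2 (H × H))).snd
      = -(Cop T dT lam hG y) := by
    show (0 : H) - _ = _
    rw [zero_sub]
    rfl
  rw [hf, hs] at h1
  have h2 : ((WithLp.linearEquiv 2 ℂ (H × H)).symm (u, T u - lam • u)).fst = u := rfl
  have h3 : ((WithLp.linearEquiv 2 ℂ (H × H)).symm (u, T u - lam • u)).snd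
      = T u - lam • u := rfl
  rw [h2, h3, inner_neg_left] at h1
  linear_combination h1

lemma Rop_sa (y z : H) :
    (inner ℂ (Rop T dT lam hG y) z : ℂ) = inner ℂ y (Rop T dT lam hG z) := by
  have hy := key_identity T dT lam hG y (Rop T dT lam hG z) (Rop_mem T dT lam hG z).1
  have hz := key_identity T dT lam hG z (Rop T dT lam hG y) (Rop_mem T dT lam hG y).1
  rw [← (Rop_mem T dT lam hG z).2] at hy
  rw [← (Rop_mem T dT lam hG y).2] at hz
  have hz' := congrArg (starRingEnd ℂ) hz
  rw [inner_sub_left] at hy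
  have e1 : (starRingEnd ℂ) (inner ℂ (z - Rop T dT lam hG z) (Rop T dT lam hG y) : ℂ)
      = inner ℂ (Rop T dT lam hG y) (z - Rop T dT lam hG z) := inner_conj_symm _ _
  have e2 : (starRingEnd ℂ) (inner ℂ (Cop T dT lam hG z) (Cop T dT lam hG y) : ℂ)
      = inner ℂ (Cop T dT lam hG y) (Cop T dT lam hG z) := inner_conj_symm _ _
  rw [inner_sub_left] at hz
  rw [e1, e2] at hz'
  rw [inner_sub_right] at hz'
  -- hy : ⟪y, Rz⟫ - ⟪Ry, Rz⟫ = ⟪Cy, Cz⟫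
  -- hz' : ⟪Ry, z⟫ - ⟪Ry, Rz⟫ = ⟪Cy, Cz⟫
  linear_combination hz' - hy

/-- The bounded operator `B = (S(I+S*S)⁻¹)*` with `B S = I - R` on `dT`. -/
def Bop : H →L[ℂ] H := ContinuousLinearMap.adjoint (Cop T dT lam hG)

lemma Bop_apply (x : H) (hx : x ∈ dT) :
    Bop T dT lam hG (T x - lam • x) = x - Rop T dT lam hG x := by
  refine ext_inner_left ℂ fun y => ?_
  rw [Bop, ContinuousLinearMap.adjoint_inner_right]
  rw [← key_identity T dT lam hG y x hx]
  rw [inner_sub_left, inner_sub_right, Rop_sa]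

lemma norm_decomp (y : H) :
    (inner ℂ (y - Rop T dT lam hG y) y : ℂ)
      = ((‖y - Rop T dT lam hG y‖ ^ 2 + ‖Cop T dT lam hG y‖ ^ 2 : ℝ) : ℂ) := by
  haveI : CompleteSpace (graphSub T dT lam) := hG.completeSpace_coe
  set v : WithLp 2 (H × H) := inlE y with hv
  set p : WithLp 2 (H × H) := (Pmap T dT lam hG v : WithLp 2 (H × H)) with hpdef
  have hp : p ∈ graphSub T dT lam := (Pmap T dT lam hG v).2
  have h0 : (inner ℂ (v - p) p : ℂ) = 0 :=
    Submodule.starProjection_inner_eq_zero (K := graphSub T dT lam) v p hp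
  have h1 : (inner ℂ (v - p) v : ℂ) = inner ℂ (v - p) (v - p) := by
    rw [inner_sub_right, h0, sub_zero]
  have hf : (v - p).fst = y - Rop T dT lam hG y := rfl
  have hs : (v - p).snd = -(Cop T dT lam hG y) := by
    show (0 : H) - _ = _
    rw [zero_sub]
    rfl
  have h2 : (inner ℂ (v - p) v : ℂ) = inner ℂ (y - Rop T dT lam hG y) y := by
    rw [WithLp.prod_inner_apply]
    simp only [WithLp.ofLp_fst, WithLp.ofLp_snd]
    rw [hf, hs]
    have hv2 : v.snd = (0 : H) := rfl
    have hv1 : v.fst = y := rfl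
    rw [hv2, inner_zero_right, add_zero, hv1]
  have h3 : (inner ℂ (v - p) (v - p) : ℂ)
      = ((‖y - Rop T dT lam hG y‖ ^ 2 + ‖Cop T dT lam hG y‖ ^ 2 : ℝ) : ℂ) := by
    rw [WithLp.prod_inner_apply]
    simp only [WithLp.ofLp_fst, WithLp.ofLp_snd]
    rw [hf, hs, inner_neg_neg,
      inner_self_eq_norm_sq_to_K, inner_self_eq_norm_sq_to_K]
    norm_cast
  rw [← h2, h1, h3]

end AuxBMT

private lemma sqrt_trick {f : ℕ → ℝ} (hf : ∀ n, 0 ≤ f n)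
    (h : Tendsto (fun n => f n ^ 2) atTop (𝓝 0)) : Tendsto f atTop (𝓝 0) := by
  have h2 : Tendsto (fun n => Real.sqrt (f n ^ 2)) atTop (𝓝 (0 : ℝ)) := by
    have := (Real.continuous_sqrt.tendsto 0).comp h
    simpa [Function.comp_def] using this
  have he : (fun n => Real.sqrt (f n ^ 2)) = f := funext fun n => Real.sqrt_sq (hf n)
  rwa [he] at h2

/-- `σ_e(T) = ⋂_{B ∈ L(H)} W_e(BT, B)` for a closed densely defined operator `T`,
with `σ_e` defined via singular sequences. -/
theorem stmt_18 (T : H →ₗ[ℂ] H) (dT : Submodule ℂ H)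
    (hclosed : IsClosed {p : H × H | p.1 ∈ dT ∧ p.2 = T p.1})
    (hdense : Dense (dT : Set H)) :
    {lam : ℂ | ∃ x : ℕ → H, (∀ n, x n ∈ dT) ∧ (∀ n, ‖x n‖ = 1) ∧
        (∀ y : H, Tendsto (fun n => (inner ℂ y (x n) : ℂ)) atTop (𝓝 0)) ∧
        Tendsto (fun n => ‖T (x n) - lam • x n‖) atTop (𝓝 0)} =
      ⋂ B : H →L[ℂ] H, pencilWe ((B : H →ₗ[ℂ] H) ∘ₗ T) (B : H →ₗ[ℂ] H) dT := by
  ext lam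
  simp only [Set.mem_iInter, Set.mem_setOf_eq, pencilWe, essNumRange, Set.mem_setOf_eq]
  constructor
  · rintro ⟨x, hmem, hnorm, hweak, hconv⟩ B
    refine ⟨x, hmem, hnorm, hweak, ?_⟩
    have happ : ∀ n, (((B : H →ₗ[ℂ] H) ∘ₗ T - lam • (B : H →ₗ[ℂ] H)) (x n))
        = B (T (x n) - lam • x n) := by
      intro n
      simp [LinearMap.sub_apply, LinearMap.comp_apply, LinearMap.smul_apply, map_sub, map_smul]
    simp only [happ]
    rw [tendsto_zero_iff_norm_tendsto_zero]
    refine squeeze_zero (g := fun n => ‖B‖ * ‖T (x n) - lam • x n‖)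
      (fun n => norm_nonneg _) (fun n => ?_) (by simpa using hconv.const_mul ‖B‖)
    calc ‖(inner ℂ (B (T (x n) - lam • x n)) (x n) : ℂ)‖
        ≤ ‖B (T (x n) - lam • x n)‖ * ‖x n‖ := norm_inner_le_norm _ _
      _ = ‖B (T (x n) - lam • x n)‖ := by rw [hnorm n, mul_one]
      _ ≤ ‖B‖ * ‖T (x n) - lam • x n‖ := B.le_opNorm _
  · intro hall
    have hG := isClosed_graphSub T dT lam hclosed
    obtain ⟨x, hmem, hnorm, hweak, hconv⟩ := hall (Bop T dT lam hG)
    have happ : ∀ n, (((Bop T dT lam hG : H →ₗ[ℂ] H) ∘ₗ T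
          - lam • (Bop T dT lam hG : H →ₗ[ℂ] H)) (x n))
        = x n - Rop T dT lam hG (x n) := by
      intro n
      have h1 : (((Bop T dT lam hG : H →ₗ[ℂ] H) ∘ₗ T
            - lam • (Bop T dT lam hG : H →ₗ[ℂ] H)) (x n))
          = Bop T dT lam hG (T (x n) - lam • x n) := by
        simp [LinearMap.sub_apply, LinearMap.comp_apply, LinearMap.smul_apply, map_sub, map_smul]
      rw [h1, Bop_apply T dT lam hG _ (hmem n)]
    simp only [happ] at hconv
    simp only [norm_decomp T dT lam hG] at hconv
    have ha : Tendsto (fun n => (‖x n - Rop T dT lam hG (x n)‖ ^ 2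
        + ‖Cop T dT lam hG (x n)‖ ^ 2 : ℝ)) atTop (𝓝 0) := by
      simpa [Function.comp_def, ← Complex.ofReal_pow, Complex.ofReal_re]
        using (Complex.continuous_re.tendsto 0).comp hconv
    have hb : Tendsto (fun n => ‖x n - Rop T dT lam hG (x n)‖) atTop (𝓝 0) := by
      refine sqrt_trick (fun n => norm_nonneg _) ?_
      exact squeeze_zero (fun n => sq_nonneg _)
        (fun n => le_add_of_nonneg_right (sq_nonneg _)) ha
    have hc : Tendsto (fun n => ‖Cop T dT lam hG (x n)‖) atTop (𝓝 0) := by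
      refine sqrt_trick (fun n => norm_nonneg _) ?_
      exact squeeze_zero (fun n => sq_nonneg _)
        (fun n => le_add_of_nonneg_left (sq_nonneg _)) ha
    have hRnorm : Tendsto (fun n => ‖Rop T dT lam hG (x n)‖) atTop (𝓝 1) := by
      rw [tendsto_iff_norm_sub_tendsto_zero]
      refine squeeze_zero (fun n => norm_nonneg _) (fun n => ?_) hb
      calc ‖‖Rop T dT lam hG (x n)‖ - 1‖
          = |‖Rop T dT lam hG (x n)‖ - ‖x n‖| := by rw [hnorm n]; rfl
        _ ≤ ‖Rop T dT lam hG (x n) - x n‖ := abs_norm_sub_norm_le _ _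
        _ = ‖x n - Rop T dT lam hG (x n)‖ := norm_sub_rev _ _
    obtain ⟨N, hN⟩ := Filter.eventually_atTop.1
      (hRnorm.eventually (eventually_gt_nhds (by norm_num : (1:ℝ)/2 < 1)))
    set R := fun n => Rop T dT lam hG (x (n + N)) with hR
    have hNn : ∀ n, (1:ℝ)/2 < ‖R n‖ := fun n => hN _ (Nat.le_add_left N n)
    have hRpos : ∀ n, (0:ℝ) < ‖R n‖ :=
      fun n => lt_trans (by norm_num : (0:ℝ) < 1/2) (hNn n)
    set c : ℕ → ℂ := fun n => ((‖R n‖ : ℝ) : ℂ)⁻¹ with hcdef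
    have hcnorm : ∀ n, ‖c n‖ = ‖R n‖⁻¹ := by
      intro n
      rw [hcdef]
      simp [Complex.norm_real, abs_of_pos (hRpos n)]
    have hcbound : ∀ n, ‖c n‖ ≤ 2 := by
      intro n
      rw [hcnorm n]
      rw [inv_le_comm₀ (hRpos n) (by norm_num)]
      linarith [hNn n]
    refine ⟨fun n => c n • R n, fun n => dT.smul_mem _ (Rop_mem T dT lam hG _).1,
      fun n => ?_, fun z => ?_, ?_⟩
    · rw [norm_smul, hcnorm n, inv_mul_cancel₀ (hRpos n).ne']
    · -- weak nullity
      have hbase : Tendsto (fun n => (inner ℂ z (R n) : ℂ)) atTop (𝓝 0) := by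
        have h1 : Tendsto (fun n => (inner ℂ z (x (n + N)) : ℂ)) atTop (𝓝 0) :=
          (hweak z).comp (tendsto_add_atTop_nat N)
        have h2 : Tendsto (fun n => (inner ℂ z (R n - x (n + N)) : ℂ)) atTop (𝓝 0) := by
          rw [tendsto_zero_iff_norm_tendsto_zero]
          refine squeeze_zero (g := fun n => ‖z‖ * ‖x (n + N) - Rop T dT lam hG (x (n + N))‖)
            (fun n => norm_nonneg _) (fun n => ?_)
            (by simpa using (hb.comp (tendsto_add_atTop_nat N)).const_mul ‖z‖)
          calc ‖(inner ℂ z (R n - x (n + N)) : ℂ)‖ ≤ ‖z‖ * ‖R n - x (n + N)‖ :=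
              norm_inner_le_norm _ _
            _ = ‖z‖ * ‖x (n + N) - Rop T dT lam hG (x (n + N))‖ := by rw [norm_sub_rev]
        have := h1.add h2
        simp only [← inner_add_right, add_sub_cancel, add_zero] at this
        exact this
      rw [tendsto_zero_iff_norm_tendsto_zero]
      refine squeeze_zero (g := fun n => 2 * ‖(inner ℂ z (R n) : ℂ)‖)
        (fun n => norm_nonneg _) (fun n => ?_)
        (by simpa using (tendsto_zero_iff_norm_tendsto_zero.1 hbase).const_mul 2)
      rw [inner_smul_right, norm_mul]
      exact mul_le_mul_of_nonneg_right (hcbound n) (norm_nonneg _)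
    · -- singular sequence property
      have heq : ∀ n, T (c n • R n) - lam • (c n • R n) = c n • Cop T dT lam hG (x (n + N)) := by
        intro n
        rw [map_smul, (Rop_mem T dT lam hG (x (n + N))).2]
        rw [smul_sub, smul_comm lam (c n)]
      refine squeeze_zero (g := fun n => 2 * ‖Cop T dT lam hG (x (n + N))‖)
        (fun n => norm_nonneg _) (fun n => ?_)
        (by simpa using (hc.comp (tendsto_add_atTop_nat N)).const_mul 2)
      rw [heq n, norm_smul]
      exact mul_le_mul_of_nonneg_right (hcbound n) (norm_nonneg _)
end

section
/- Let H₁, H₂ be infinite-dimensional Hilbert spaces, T = diag(T₁, T₂) a block-diagonal operator in H₁ ⊕ H₂ with a := sup Re W(T₁) < ∞ and b := inf Re W(T₂) > −∞, and let B := diag(−I, I). If a < b, then W(BT, B) ⊆ { λ ∈ ℂ : Re λ ≤ a or Re λ ≥ b }. -/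
open Filter Topology

lemma aux_upper {H : Type*} [NormedAddCommGroup H] [InnerProductSpace ℂ H]
    (T : H →ₗ[ℂ] H) (d : Submodule ℂ H) (a : ℝ)
    (hbdd : BddAbove (Complex.re '' {z : ℂ | ∃ x ∈ d, ‖x‖ = 1 ∧ z = (inner ℂ (T x) x : ℂ)}))
    (ha : a = sSup (Complex.re '' {z : ℂ | ∃ x ∈ d, ‖x‖ = 1 ∧ z = (inner ℂ (T x) x : ℂ)}))
    {x : H} (hx : x ∈ d) : (inner ℂ (T x) x : ℂ).re ≤ a * ‖x‖ ^ 2 := by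
  rcases eq_or_ne x 0 with rfl | hx0
  · simp
  · have hnx : (0:ℝ) < ‖x‖ := norm_pos_iff.2 hx0
    set u := (‖x‖⁻¹ : ℂ) • x with hu
    have hud : u ∈ d := d.smul_mem _ hx
    have hun : ‖u‖ = 1 := by
      simp [hu, norm_smul, abs_of_pos hnx, inv_mul_cancel₀ hnx.ne']
    have hmem : (inner ℂ (T u) u : ℂ).re ∈
        Complex.re '' {z : ℂ | ∃ x ∈ d, ‖x‖ = 1 ∧ z = (inner ℂ (T x) x : ℂ)} :=
      ⟨_, ⟨u, hud, hun, rfl⟩, rfl⟩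
    have hle : (inner ℂ (T u) u : ℂ).re ≤ a := ha ▸ le_csSup hbdd hmem
    have hTu : (inner ℂ (T u) u : ℂ) = (‖x‖^2 : ℝ)⁻¹ * inner ℂ (T x) x := by
      rw [hu, map_smul, inner_smul_left, inner_smul_right, ← Complex.ofReal_inv,
        Complex.conj_ofReal]
      push_cast
      ring
    rw [hTu, Complex.re_ofReal_mul] at hle
    have h2 : (0:ℝ) < ‖x‖^2 := by positivity
    calc (inner ℂ (T x) x : ℂ).re = (‖x‖^2) * ((‖x‖^2)⁻¹ * (inner ℂ (T x) x : ℂ).re) := by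
          field_simp
      _ ≤ (‖x‖^2) * a := by nlinarith
      _ = a * ‖x‖^2 := by ring

lemma aux_lower {H : Type*} [NormedAddCommGroup H] [InnerProductSpace ℂ H]
    (T : H →ₗ[ℂ] H) (d : Submodule ℂ H) (b : ℝ)
    (hbdd : BddBelow (Complex.re '' {z : ℂ | ∃ x ∈ d, ‖x‖ = 1 ∧ z = (inner ℂ (T x) x : ℂ)}))
    (hb : b = sInf (Complex.re '' {z : ℂ | ∃ x ∈ d, ‖x‖ = 1 ∧ z = (inner ℂ (T x) x : ℂ)}))
    {x : H} (hx : x ∈ d) : b * ‖x‖ ^ 2 ≤ (inner ℂ (T x) x : ℂ).re := by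
  rcases eq_or_ne x 0 with rfl | hx0
  · simp
  · have hnx : (0:ℝ) < ‖x‖ := norm_pos_iff.2 hx0
    set u := (‖x‖⁻¹ : ℂ) • x with hu
    have hud : u ∈ d := d.smul_mem _ hx
    have hun : ‖u‖ = 1 := by
      simp [hu, norm_smul, abs_of_pos hnx, inv_mul_cancel₀ hnx.ne']
    have hmem : (inner ℂ (T u) u : ℂ).re ∈
        Complex.re '' {z : ℂ | ∃ x ∈ d, ‖x‖ = 1 ∧ z = (inner ℂ (T x) x : ℂ)} :=
      ⟨_, ⟨u, hud, hun, rfl⟩, rfl⟩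
    have hle : b ≤ (inner ℂ (T u) u : ℂ).re := hb ▸ csInf_le hbdd hmem
    have hTu : (inner ℂ (T u) u : ℂ) = (‖x‖^2 : ℝ)⁻¹ * inner ℂ (T x) x := by
      rw [hu, map_smul, inner_smul_left, inner_smul_right, ← Complex.ofReal_inv,
        Complex.conj_ofReal]
      push_cast
      ring
    rw [hTu, Complex.re_ofReal_mul] at hle
    have h2 : (0:ℝ) < ‖x‖^2 := by positivity
    calc b * ‖x‖^2 ≤ (‖x‖^2) * ((‖x‖^2)⁻¹ * (inner ℂ (T x) x : ℂ).re) := by nlinarith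
      _ = (inner ℂ (T x) x : ℂ).re := by field_simp

/-- For `T = diag(T₁,T₂)` and `B = diag(-I, I)` in `H₁ ⊕ H₂`, if
`a = sup Re W(T₁) < ∞`, `b = inf Re W(T₂) > -∞` and `a < b`, then
`W(BT, B) ⊆ {λ : Re λ ≤ a or Re λ ≥ b}`.  Here `(BT - λB)(x,y) = (λx - T₁x, T₂y - λy)`
and `W(BT,B) = {λ : 0 ∈ closure W(BT - λB)}`. -/
theorem stmt_19 {H₁ H₂ : Type*}
    [NormedAddCommGroup H₁] [InnerProductSpace ℂ H₁] [CompleteSpace H₁]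
    [NormedAddCommGroup H₂] [InnerProductSpace ℂ H₂] [CompleteSpace H₂]
    (hinf₁ : ¬ FiniteDimensional ℂ H₁) (hinf₂ : ¬ FiniteDimensional ℂ H₂)
    (T₁ : H₁ →ₗ[ℂ] H₁) (T₂ : H₂ →ₗ[ℂ] H₂)
    (d₁ : Submodule ℂ H₁) (d₂ : Submodule ℂ H₂)
    (a b : ℝ)
    (hbdd₁ : BddAbove (Complex.re ''
      {z : ℂ | ∃ x ∈ d₁, ‖x‖ = 1 ∧ z = (inner ℂ (T₁ x) x : ℂ)}))
    (ha : a = sSup (Complex.re ''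
      {z : ℂ | ∃ x ∈ d₁, ‖x‖ = 1 ∧ z = (inner ℂ (T₁ x) x : ℂ)}))
    (hbdd₂ : BddBelow (Complex.re ''
      {z : ℂ | ∃ y ∈ d₂, ‖y‖ = 1 ∧ z = (inner ℂ (T₂ y) y : ℂ)}))
    (hb : b = sInf (Complex.re ''
      {z : ℂ | ∃ y ∈ d₂, ‖y‖ = 1 ∧ z = (inner ℂ (T₂ y) y : ℂ)}))
    (hab : a < b) :
    {lam : ℂ | (0 : ℂ) ∈ closure {z : ℂ | ∃ x y, x ∈ d₁ ∧ y ∈ d₂ ∧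
        ‖x‖ ^ 2 + ‖y‖ ^ 2 = 1 ∧
        z = (inner ℂ (lam • x - T₁ x) x : ℂ) + (inner ℂ (T₂ y - lam • y) y : ℂ)}} ⊆
      {lam : ℂ | lam.re ≤ a ∨ b ≤ lam.re} := by
  intro lam hlam
  by_contra h
  simp only [Set.mem_setOf_eq, not_or, not_le] at h
  obtain ⟨h1, h2⟩ := h
  set δ := min (lam.re - a) (b - lam.re) with hδ
  have hδpos : 0 < δ := lt_min (by linarith) (by linarith)
  have hsub : {z : ℂ | ∃ x y, x ∈ d₁ ∧ y ∈ d₂ ∧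
      ‖x‖ ^ 2 + ‖y‖ ^ 2 = 1 ∧
      z = (inner ℂ (lam • x - T₁ x) x : ℂ) + (inner ℂ (T₂ y - lam • y) y : ℂ)}
      ⊆ {z : ℂ | δ ≤ z.re} := by
    rintro z ⟨x, y, hx, hy, hnorm, rfl⟩
    have hre : ((inner ℂ (lam • x - T₁ x) x : ℂ) + (inner ℂ (T₂ y - lam • y) y : ℂ)).re
        = (lam.re * ‖x‖^2 - (inner ℂ (T₁ x) x : ℂ).re)
          + ((inner ℂ (T₂ y) y : ℂ).re - lam.re * ‖y‖^2) := by
      simp only [inner_sub_left, inner_smul_left, inner_self_eq_norm_sq_to_K]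
      simp [Complex.add_re, Complex.sub_re, Complex.mul_re, Complex.conj_re,
        Complex.conj_im, ← Complex.ofReal_pow, Complex.ofReal_re, Complex.ofReal_im]
    have hA := aux_upper T₁ d₁ a hbdd₁ ha hx
    have hB := aux_lower T₂ d₂ b hbdd₂ hb hy
    have hδ1 : δ ≤ lam.re - a := min_le_left _ _
    have hδ2 : δ ≤ b - lam.re := min_le_right _ _
    have hx2 : (0:ℝ) ≤ ‖x‖^2 := by positivity
    have hy2 : (0:ℝ) ≤ ‖y‖^2 := by positivity
    simp only [Set.mem_setOf_eq, hre]
    nlinarith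
  have hcl : (0:ℂ) ∈ {z : ℂ | δ ≤ z.re} := by
    have : closure {z : ℂ | ∃ x y, x ∈ d₁ ∧ y ∈ d₂ ∧
        ‖x‖ ^ 2 + ‖y‖ ^ 2 = 1 ∧
        z = (inner ℂ (lam • x - T₁ x) x : ℂ) + (inner ℂ (T₂ y - lam • y) y : ℂ)}
        ⊆ {z : ℂ | δ ≤ z.re} :=
      closure_minimal hsub (isClosed_le continuous_const Complex.continuous_re)
    exact this hlam
  simp only [Set.mem_setOf_eq, Complex.zero_re] at hcl
  linarith
end
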